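/- arXiv:2410.18120 — 17 statements merged into one kernel-verified Lean document; each statement's English description precedes it below -/
import Mathlib

section
/- Let U be a uninorm on [0,1] with neutral element e ∈ (0,1). Then U(0,1) ∈ {0,1}. -/
open Set

/-- `U` is a uninorm on `[0,1]` with neutral element `e`. -/
def IsUninorm (U : ℝ → ℝ → ℝ) (e : ℝ) : Prop :=
  e ∈ Icc (0:ℝ) 1 ∧
  (∀ x ∈ Icc (0:ℝ) 1, ∀ y ∈ Icc (0:ℝ) 1, U x y ∈ Icc (0:ℝ) 1) ∧
  (∀ x ∈ Icc (0:ℝ) 1, ∀ y ∈ Icc (0:ℝ) 1, U x y = U y x) ∧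
  (∀ x ∈ Icc (0:ℝ) 1, ∀ y ∈ Icc (0:ℝ) 1, ∀ z ∈ Icc (0:ℝ) 1,
      U (U x y) z = U x (U y z)) ∧
  (∀ x ∈ Icc (0:ℝ) 1, ∀ y ∈ Icc (0:ℝ) 1, ∀ x' ∈ Icc (0:ℝ) 1, ∀ y' ∈ Icc (0:ℝ) 1,
      x ≤ x' → y ≤ y' → U x y ≤ U x' y') ∧
  (∀ x ∈ Icc (0:ℝ) 1, U e x = x)

/-- `U₁` is distributive over `U₂` on `[0,1]`. -/
def DistributiveOver (U₁ U₂ : ℝ → ℝ → ℝ) : Prop :=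
  ∀ x ∈ Icc (0:ℝ) 1, ∀ y ∈ Icc (0:ℝ) 1, ∀ z ∈ Icc (0:ℝ) 1,
    U₁ x (U₂ y z) = U₂ (U₁ x y) (U₁ x z)

theorem stmt0 (U : ℝ → ℝ → ℝ) (e : ℝ) (hU : IsUninorm U e) (he : e ∈ Ioo (0:ℝ) 1) :
    U 0 1 = 0 ∨ U 0 1 = 1 := by
  obtain ⟨heI, hrange, hcomm, hassoc, hmono, hneu⟩ := hU
  have h0 : (0:ℝ) ∈ Icc (0:ℝ) 1 := ⟨le_refl 0, zero_le_one⟩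
  have h1 : (1:ℝ) ∈ Icc (0:ℝ) 1 := ⟨zero_le_one, le_refl 1⟩
  have ha : U 0 1 ∈ Icc (0:ℝ) 1 := hrange 0 h0 1 h1
  -- U 1 1 = 1
  have h11 : U 1 1 = 1 := by
    have hle : U 1 1 ≤ 1 := (hrange 1 h1 1 h1).2
    have hge : U e 1 ≤ U 1 1 := hmono e heI 1 h1 1 h1 1 h1 heI.2 le_rfl
    rw [hneu 1 h1] at hge
    linarith
  have h00 : U 0 0 = 0 := by
    have hle : 0 ≤ U 0 0 := (hrange 0 h0 0 h0).1
    have hge : U 0 0 ≤ U 0 e := hmono 0 h0 0 h0 0 h0 e heI le_rfl heI.1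
    rw [hcomm 0 h0 e heI, hneu 0 h0] at hge
    linarith
  have ha1 : U (U 0 1) 1 = U 0 1 := by
    have := hassoc 0 h0 1 h1 1 h1
    rw [h11] at this; rw [this]
  have ha0 : U 0 (U 0 1) = U 0 1 := by
    have := hassoc 0 h0 0 h0 1 h1
    rw [h00] at this; rw [← this]
  rcases le_total (U 0 1) e with hle | hge
  · left
    have : U 0 (U 0 1) ≤ U 0 e := hmono 0 h0 (U 0 1) ha 0 h0 e heI le_rfl hle
    rw [ha0, hcomm 0 h0 e heI, hneu 0 h0] at this
    linarith [ha.1]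
  · right
    have : U e 1 ≤ U (U 0 1) 1 := hmono e heI 1 h1 (U 0 1) ha 1 h1 hge le_rfl
    rw [ha1, hneu 1 h1] at this
    linarith [ha.2]
end

section
/- Let U₁ and U₂ be uninorms on [0,1] with the same neutral element e ∈ (0,1), and suppose U₁ is distributive over U₂. Then U₁(x,y) = U₂(x,y) ∈ {x,y} for all (x,y) with min(x,y) < e < max(x,y). -/
open Set

theorem stmt4_key (U₁ U₂ : ℝ → ℝ → ℝ) (e : ℝ)
    (hU₁ : IsUninorm U₁ e) (hU₂ : IsUninorm U₂ e)
    (hd : DistributiveOver U₁ U₂)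
    (x y : ℝ) (hx : x ∈ Icc (0:ℝ) 1) (hy : y ∈ Icc (0:ℝ) 1)
    (hxe : x < e) (hey : e < y) :
    U₁ x y = U₂ x y ∧ (U₁ x y = x ∨ U₁ x y = y) := by
  obtain ⟨heI, hcl1, hc1, ha1, hm1, hn1⟩ := hU₁
  obtain ⟨-, hcl2, hc2, ha2, hm2, hn2⟩ := hU₂
  have hn1' : ∀ t ∈ Icc (0:ℝ) 1, U₁ t e = t := fun t ht => (hc1 t ht e heI).trans (hn1 t ht)
  have hn2' : ∀ t ∈ Icc (0:ℝ) 1, U₂ t e = t := fun t ht => (hc2 t ht e heI).trans (hn2 t ht)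
  set a := U₁ x y with ha
  have haI : a ∈ Icc (0:ℝ) 1 := hcl1 x hx y hy
  have hax : x ≤ a := by
    calc x = U₁ x e := (hn1' x hx).symm
    _ ≤ U₁ x y := hm1 x hx e heI x hx y hy le_rfl hey.le
  have hay : a ≤ y := by
    calc a ≤ U₁ e y := hm1 x hx y hy e heI y hy hxe.le le_rfl
    _ = y := hn1 y hy
  -- a = U₂ x a
  have h3 : a = U₂ x a := by
    have h := hd x hx e heI y hy
    rw [hn2 y hy, hn1' x hx] at h
    exact h
  -- a = U₂ a y
  have h4 : a = U₂ a y := by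
    have h := hd y hy e heI x hx
    rw [hn2 x hx, hn1' y hy, hc1 y hy x hx] at h
    exact h.trans (hc2 y hy a haI)
  set b := U₂ x y with hb
  have hbI : b ∈ Icc (0:ℝ) 1 := hcl2 x hx y hy
  -- U₂ b a = a
  have h5 : U₂ b a = a := by
    have h := ha2 x hx y hy a haI
    rw [hc2 y hy a haI, ← h4, ← h3] at h
    exact h
  rcases le_total e a with hea | hae
  · -- a ≥ e : a = y and a = b
    have hya : y ≤ a := by
      calc y = U₂ e y := (hn2 y hy).symm
      _ ≤ U₂ a y := hm2 e heI y hy a haI y hy hea le_rfl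
      _ = a := h4.symm
    have hay' : a = y := le_antisymm hay hya
    have hab : a ≤ b := by
      calc a = U₂ x a := h3
      _ ≤ U₂ x y := hm2 x hx a haI x hx y hy le_rfl hay
    have hba : b ≤ a := by
      calc b = U₂ b e := (hn2' b hbI).symm
      _ ≤ U₂ b a := hm2 b hbI e heI b hbI a haI le_rfl hea
      _ = a := h5
    exact ⟨le_antisymm hab hba, Or.inr hay'⟩
  · -- a ≤ e : a = x and a = b
    have hxa : a ≤ x := by
      calc a = U₂ x a := h3
      _ ≤ U₂ x e := hm2 x hx a haI x hx e heI le_rfl hae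
      _ = x := hn2' x hx
    have hax' : a = x := le_antisymm hxa hax
    have hba : b ≤ a := by
      calc b ≤ U₂ a y := hm2 x hx y hy a haI y hy hax le_rfl
      _ = a := h4.symm
    have hab : a ≤ b := by
      calc a = U₂ b a := h5.symm
      _ ≤ U₂ b e := hm2 b hbI a haI b hbI e heI le_rfl hae
      _ = b := hn2' b hbI
    exact ⟨le_antisymm hab hba, Or.inl hax'⟩

theorem stmt4 (U₁ U₂ : ℝ → ℝ → ℝ) (e : ℝ)
    (hU₁ : IsUninorm U₁ e) (hU₂ : IsUninorm U₂ e) (he : e ∈ Ioo (0:ℝ) 1)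
    (hd : DistributiveOver U₁ U₂)
    (x y : ℝ) (hx : x ∈ Icc (0:ℝ) 1) (hy : y ∈ Icc (0:ℝ) 1)
    (h1 : min x y < e) (h2 : e < max x y) :
    U₁ x y = U₂ x y ∧ (U₁ x y = x ∨ U₁ x y = y) := by
  rcases le_total x y with hxy | hyx
  · rw [min_eq_left hxy] at h1
    rw [max_eq_right hxy] at h2
    exact stmt4_key U₁ U₂ e hU₁ hU₂ hd x y hx hy h1 h2
  · rw [min_eq_right hyx] at h1
    rw [max_eq_left hyx] at h2
    obtain ⟨heq, hor⟩ := stmt4_key U₁ U₂ e hU₁ hU₂ hd y x hy hx h1 h2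
    have hc1 := hU₁.2.2.1 x hx y hy
    have hc2 := hU₂.2.2.1 x hx y hy
    rw [hc1, hc2]
    exact ⟨heq, hor.symm⟩
end

section
/- Let 0 < e₂ < e₁ < 1 and let U₁, U₂ be uninorms on [0,1] with neutral elements e₁, e₂ respectively, such that U₁ is distributive over U₂. Then U₂(x,y) = min(x,y) for all x,y ∈ [0,e₂]. -/
open Set

theorem stmt5 (U₁ U₂ : ℝ → ℝ → ℝ) (e₁ e₂ : ℝ)
    (h0 : 0 < e₂) (h21 : e₂ < e₁) (h1 : e₁ < 1)
    (hU₁ : IsUninorm U₁ e₁) (hU₂ : IsUninorm U₂ e₂)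
    (hd : DistributiveOver U₁ U₂) :
    ∀ x ∈ Icc (0:ℝ) e₂, ∀ y ∈ Icc (0:ℝ) e₂, U₂ x y = min x y := by
  obtain ⟨he₁, hcl₁, hcomm₁, _, hmono₁, hneu₁⟩ := hU₁
  obtain ⟨he₂, hcl₂, hcomm₂, _, hmono₂, hneu₂⟩ := hU₂
  -- membership helper
  have hsub : Icc (0:ℝ) e₂ ⊆ Icc (0:ℝ) 1 :=
    Icc_subset_Icc le_rfl (he₂.2)
  -- a = U₂ e₁ e₁ ≥ e₁
  set a := U₂ e₁ e₁ with ha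
  have ha1 : a ∈ Icc (0:ℝ) 1 := hcl₂ e₁ he₁ e₁ he₁
  have hae : e₁ ≤ a := by
    have := hmono₂ e₂ he₂ e₁ he₁ e₁ he₁ e₁ he₁ h21.le le_rfl
    rwa [hneu₂ e₁ he₁] at this
  -- sub-idempotency on [0,1]
  have hidem : ∀ x ∈ Icc (0:ℝ) 1, x ≤ U₂ x x := by
    intro x hx
    have hdist := hd x hx e₁ he₁ e₁ he₁
    have hxe : U₁ x e₁ = x := by rw [hcomm₁ x hx e₁ he₁, hneu₁ x hx]
    rw [hxe] at hdist
    have : U₁ x e₁ ≤ U₁ x a := hmono₁ x hx e₁ he₁ x hx a ha1 le_rfl hae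
    rw [hxe] at this
    calc x ≤ U₁ x a := this
    _ = U₂ x x := hdist
  -- main
  intro x hx y hy
  have hx1 := hsub hx
  have hy1 := hsub hy
  rcases le_total x y with hxy | hyx
  · rw [min_eq_left hxy]
    have hub : U₂ x y ≤ x := by
      have := hmono₂ x hx1 y hy1 x hx1 e₂ he₂ le_rfl hy.2
      rwa [hcomm₂ x hx1 e₂ he₂, hneu₂ x hx1] at this
    have hlb : x ≤ U₂ x y := by
      have h1 := hmono₂ x hx1 x hx1 x hx1 y hy1 le_rfl hxy
      exact (hidem x hx1).trans h1
    linarith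
  · rw [min_eq_right hyx]
    have hub : U₂ x y ≤ y := by
      have := hmono₂ x hx1 y hy1 e₂ he₂ y hy1 hx.2 le_rfl
      rwa [hneu₂ y hy1] at this
    have hlb : y ≤ U₂ x y := by
      have h1 := hmono₂ y hy1 y hy1 x hx1 y hy1 hyx le_rfl
      exact (hidem y hy1).trans h1
    linarith
end

section
/- Let 0 < e₂ < e₁ < 1 and let U₁, U₂ be uninorms on [0,1] with neutral elements e₁, e₂ respectively, such that U₁ is distributive over U₂. Then U₁(x,y) = min(x,y) for all x ∈ [0,e₂] and y ∈ [e₂,e₁]. -/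
open Set

theorem stmt6 (U₁ U₂ : ℝ → ℝ → ℝ) (e₁ e₂ : ℝ)
    (h0 : 0 < e₂) (h21 : e₂ < e₁) (h1 : e₁ < 1)
    (hU₁ : IsUninorm U₁ e₁) (hU₂ : IsUninorm U₂ e₂)
    (hd : DistributiveOver U₁ U₂) :
    ∀ x ∈ Icc (0:ℝ) e₂, ∀ y ∈ Icc e₂ e₁, U₁ x y = min x y := by
  obtain ⟨he₁, hcl₁, hcomm₁, hassoc₁, hmono₁, hneut₁⟩ := hU₁
  obtain ⟨he₂, hcl₂, hcomm₂, hassoc₂, hmono₂, hneut₂⟩ := hU₂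
  intro x hx y hy
  have hx' : x ∈ Icc (0:ℝ) 1 := ⟨hx.1, hx.2.trans (h21.le.trans h1.le)⟩
  have hy' : y ∈ Icc (0:ℝ) 1 := ⟨(h0.le.trans hy.1), hy.2.trans h1.le⟩
  -- x ≤ y
  have hxy : x ≤ y := hx.2.trans hy.1
  have hxe1 : U₁ x e₁ = x := by rw [hcomm₁ x hx' e₁ he₁]; exact hneut₁ x hx'
  -- upper bound
  have hub : U₁ x y ≤ x := by
    calc U₁ x y ≤ U₁ x e₁ := hmono₁ x hx' y hy' x hx' e₁ he₁ le_rfl hy.2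
    _ = x := hxe1
  -- a := U₁ x e₂ = x
  have ha : U₁ x e₂ ∈ Icc (0:ℝ) 1 := hcl₁ x hx' e₂ he₂
  have key : x = U₂ (U₁ x e₂) x := by
    have hd' := hd x hx' e₂ he₂ e₁ he₁
    rw [hneut₂ e₁ he₁, hxe1] at hd'
    exact hd'
  have hax : U₁ x e₂ = x := by
    have h1' : U₁ x e₂ ≤ x := by
      calc U₁ x e₂ ≤ U₁ x e₁ := hmono₁ x hx' e₂ he₂ x hx' e₁ he₁ le_rfl h21.le
      _ = x := hxe1
    have h2' : x ≤ U₁ x e₂ := by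
      calc x = U₂ (U₁ x e₂) x := key
      _ ≤ U₂ (U₁ x e₂) e₂ := hmono₂ _ ha x hx' _ ha e₂ he₂ le_rfl hx.2
      _ = U₂ e₂ (U₁ x e₂) := hcomm₂ _ ha e₂ he₂
      _ = U₁ x e₂ := hneut₂ _ ha
    linarith
  have hlb : x ≤ U₁ x y := by
    calc x = U₁ x e₂ := hax.symm
    _ ≤ U₁ x y := hmono₁ x hx' e₂ he₂ x hx' y hy' le_rfl hy.1
  rw [min_eq_left hxy]
  linarith
end

section
/- Let 0 < e₂ < e₁ < 1 and let U₁, U₂ be uninorms on [0,1] with neutral elements e₁, e₂ respectively, such that U₁ is distributive over U₂. Then U₂(x,y) = min(x,y) for all x ∈ [0,e₂) and y ∈ [e₂,e₁]. -/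
open Set

theorem stmt7 (U₁ U₂ : ℝ → ℝ → ℝ) (e₁ e₂ : ℝ)
    (h0 : 0 < e₂) (h21 : e₂ < e₁) (h1 : e₁ < 1)
    (hU₁ : IsUninorm U₁ e₁) (hU₂ : IsUninorm U₂ e₂)
    (hd : DistributiveOver U₁ U₂) :
    ∀ x ∈ Ico (0:ℝ) e₂, ∀ y ∈ Icc e₂ e₁, U₂ x y = min x y := by
  obtain ⟨he₁I, hr₁, hc₁, ha₁, hm₁, hn₁⟩ := hU₁
  obtain ⟨he₂I, hr₂, hc₂, ha₂, hm₂, hn₂⟩ := hU₂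
  intro x hx y hy
  have hxI : x ∈ Icc (0:ℝ) 1 := ⟨hx.1, by linarith [hx.2]⟩
  have hyI : y ∈ Icc (0:ℝ) 1 := ⟨le_trans h0.le hy.1, le_trans hy.2 h1.le⟩
  have n₁ : ∀ t ∈ Icc (0:ℝ) 1, U₁ t e₁ = t := fun t ht => by
    rw [hc₁ t ht e₁ he₁I, hn₁ t ht]
  have n₂ : ∀ t ∈ Icc (0:ℝ) 1, U₂ t e₂ = t := fun t ht => by
    rw [hc₂ t ht e₂ he₂I, hn₂ t ht]
  have haI : U₂ e₁ e₁ ∈ Icc (0:ℝ) 1 := hr₂ e₁ he₁I e₁ he₁I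
  have ha_ge : e₁ ≤ U₂ e₁ e₁ := by
    have h := hm₂ e₂ he₂I e₁ he₁I e₁ he₁I e₁ he₁I h21.le le_rfl
    rwa [hn₂ e₁ he₁I] at h
  -- x is idempotent for U₂
  have hxx : U₂ x x = x := by
    have hda := hd x hxI e₁ he₁I e₁ he₁I
    rw [n₁ x hxI] at hda
    have hge : x ≤ U₁ x (U₂ e₁ e₁) := by
      have h := hm₁ x hxI e₁ he₁I x hxI (U₂ e₁ e₁) haI le_rfl ha_ge
      rwa [n₁ x hxI] at h
    have hle : U₂ x x ≤ x := by
      have h := hm₂ x hxI x hxI x hxI e₂ he₂I le_rfl hx.2.le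
      rwa [n₂ x hxI] at h
    linarith [hda ▸ hge]
  -- e₂ is idempotent for U₁
  have hbb : U₁ e₂ e₂ = e₂ := by
    have hdb := hd e₂ he₂I e₂ he₂I e₁ he₁I
    rw [hn₂ e₁ he₁I, n₁ e₂ he₂I, n₂ (U₁ e₂ e₂) (hr₁ e₂ he₂I e₂ he₂I)] at hdb
    exact hdb.symm
  -- U₁ e₂ y = e₂
  have hq : U₁ e₂ y = e₂ := by
    have hle : U₁ e₂ y ≤ e₂ := by
      have h := hm₁ e₂ he₂I y hyI e₂ he₂I e₁ he₁I le_rfl hy.2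
      rwa [n₁ e₂ he₂I] at h
    have hge : e₂ ≤ U₁ e₂ y := by
      have h := hm₁ e₂ he₂I e₂ he₂I e₂ he₂I y hyI le_rfl hy.1
      rwa [hbb] at h
    linarith
  have hp_le : U₁ e₂ x ≤ x := by
    have h := hm₁ e₂ he₂I x hxI e₁ he₁I x hxI h21.le le_rfl
    rwa [hn₁ x hxI] at h
  have hmI : U₂ x y ∈ Icc (0:ℝ) 1 := hr₂ x hxI y hyI
  -- probe U₂ x y with U₁ e₂ ·
  have hFm : U₁ e₂ (U₂ x y) = U₁ e₂ x := by
    have hdc := hd e₂ he₂I x hxI y hyI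
    rwa [hq, n₂ (U₁ e₂ x) (hr₁ e₂ he₂I x hxI)] at hdc
  have hm_lt : U₂ x y < e₂ := by
    by_contra h
    push_neg at h
    have hgb : e₂ ≤ U₁ e₂ (U₂ x y) := by
      have h' := hm₁ e₂ he₂I e₂ he₂I e₂ he₂I (U₂ x y) hmI le_rfl h
      rwa [hbb] at h'
    rw [hFm] at hgb
    linarith [hp_le, hx.2]
  have hxm : U₂ x (U₂ x y) = U₂ x y := by
    have h := ha₂ x hxI x hxI y hyI
    rw [hxx] at h
    exact h.symm
  have hle : U₂ x y ≤ x := by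
    have h' := hm₂ x hxI (U₂ x y) hmI x hxI e₂ he₂I le_rfl hm_lt.le
    rw [n₂ x hxI, hxm] at h'
    exact h'
  have hge : x ≤ U₂ x y := by
    have h := hm₂ x hxI e₂ he₂I x hxI y hyI le_rfl hy.1
    rwa [n₂ x hxI] at h
  rw [min_eq_left (le_trans hx.2.le hy.1)]
  linarith
end

section
/- Let 0 < e₂ < e₁ < 1 and let U₁, U₂ be uninorms on [0,1] with neutral elements e₁, e₂ respectively, such that U₁ is distributive over U₂. Then for all x ∈ [0,e₂) and y ∈ [e₁,1], U₁(x,y) = U₂(x,y) ∈ {x,y}. -/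
open Set

theorem stmt8 (U₁ U₂ : ℝ → ℝ → ℝ) (e₁ e₂ : ℝ)
    (h0 : 0 < e₂) (h21 : e₂ < e₁) (h1 : e₁ < 1)
    (hU₁ : IsUninorm U₁ e₁) (hU₂ : IsUninorm U₂ e₂)
    (hd : DistributiveOver U₁ U₂) :
    ∀ x ∈ Ico (0:ℝ) e₂, ∀ y ∈ Icc e₁ 1,
      U₁ x y = U₂ x y ∧ (U₁ x y = x ∨ U₁ x y = y) := by
  obtain ⟨he₁I, cl1, cm1, as1, mo1, ne1⟩ := hU₁
  obtain ⟨he₂I, cl2, cm2, as2, mo2, ne2⟩ := hU₂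
  intro x hx y hy
  have he21 : e₂ ≤ e₁ := h21.le
  have hxe₂ : x ≤ e₂ := hx.2.le
  have hxe₁ : x ≤ e₁ := hxe₂.trans he21
  have hxI : x ∈ Icc (0:ℝ) 1 := ⟨hx.1, hxe₁.trans he₁I.2⟩
  have hyI : y ∈ Icc (0:ℝ) 1 := ⟨he₁I.1.trans hy.1, hy.2⟩
  -- neutral-element facts (both orders)
  have ne1' : ∀ t ∈ Icc (0:ℝ) 1, U₁ t e₁ = t := by
    intro t ht; rw [cm1 t ht e₁ he₁I]; exact ne1 t ht
  have ne2' : ∀ t ∈ Icc (0:ℝ) 1, U₂ t e₂ = t := by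
    intro t ht; rw [cm2 t ht e₂ he₂I]; exact ne2 t ht
  -- U₂ x x = x
  have hβI : U₂ e₁ e₁ ∈ Icc (0:ℝ) 1 := cl2 e₁ he₁I e₁ he₁I
  have hβge : e₁ ≤ U₂ e₁ e₁ := by
    have := mo2 e₂ he₂I e₁ he₁I e₁ he₁I e₁ he₁I he21 le_rfl
    rwa [ne2 e₁ he₁I] at this
  have hxx : U₂ x x = x := by
    have hdist := hd x hxI e₁ he₁I e₁ he₁I
    rw [ne1' x hxI] at hdist
    have hub : U₂ x x ≤ x := by
      have := mo2 x hxI x hxI x hxI e₂ he₂I le_rfl hxe₂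
      rwa [ne2' x hxI] at this
    have hlb : x ≤ U₂ x x := by
      have h1' : U₁ x e₁ ≤ U₁ x (U₂ e₁ e₁) :=
        mo1 x hxI e₁ he₁I x hxI (U₂ e₁ e₁) hβI le_rfl hβge
      rw [ne1' x hxI, hdist] at h1'
      exact h1'
    exact le_antisymm hub hlb
  -- Key lemma: U₂ e₁ x = x
  have hdI : U₂ e₁ x ∈ Icc (0:ℝ) 1 := cl2 e₁ he₁I x hxI
  have hdgex : x ≤ U₂ e₁ x := by
    have := mo2 e₂ he₂I x hxI e₁ he₁I x hxI he21 le_rfl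
    rwa [ne2 x hxI] at this
  have hdlt : U₂ e₁ x < e₂ := by
    by_contra hcon
    push_neg at hcon
    set d := U₂ e₁ x with hd_def
    have hd2I : U₂ e₁ d ∈ Icc (0:ℝ) 1 := cl2 e₁ he₁I d hdI
    have hd2ge : e₁ ≤ U₂ e₁ d := by
      have := mo2 e₁ he₁I e₂ he₂I e₁ he₁I d hdI le_rfl hcon
      rwa [ne2' e₁ he₁I] at this
    have hpI : U₁ e₂ x ∈ Icc (0:ℝ) 1 := cl1 e₂ he₂I x hxI
    have hpx : U₁ e₂ x ≤ x := by
      have := mo1 e₂ he₂I x hxI e₁ he₁I x hxI he21 le_rfl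
      rwa [ne1 x hxI] at this
    have he₂e₁ : U₁ e₂ e₁ = e₂ := ne1' e₂ he₂I
    have hA : U₁ e₂ d = U₁ e₂ x := by
      have := hd e₂ he₂I e₁ he₁I x hxI
      rwa [he₂e₁, ne2 (U₁ e₂ x) hpI] at this
    have hB : U₁ e₂ (U₂ e₁ d) = U₁ e₂ x := by
      have := hd e₂ he₂I e₁ he₁I d hdI
      rw [he₂e₁, hA] at this
      rwa [ne2 (U₁ e₂ x) hpI] at this
    have hge : e₂ ≤ U₁ e₂ (U₂ e₁ d) := by
      have := mo1 e₂ he₂I e₁ he₁I e₂ he₂I (U₂ e₁ d) hd2I le_rfl hd2ge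
      rwa [he₂e₁] at this
    rw [hB] at hge
    exact absurd (hge.trans hpx) (not_le.mpr hx.2)
  have hdeqx : U₂ e₁ x = x := by
    refine le_antisymm ?_ hdgex
    have hassoc : U₂ x (U₂ x e₁) = U₂ (U₂ x x) e₁ := (as2 x hxI x hxI e₁ he₁I).symm
    rw [hxx] at hassoc
    have hcomm : U₂ x e₁ = U₂ e₁ x := cm2 x hxI e₁ he₁I
    have hub : U₂ x (U₂ x e₁) ≤ x := by
      have h' : U₂ x (U₂ x e₁) ≤ U₂ x e₂ := by
        refine mo2 x hxI (U₂ x e₁) (by rw [hcomm]; exact hdI) x hxI e₂ he₂I le_rfl ?_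
        rw [hcomm]; exact hdlt.le
      rwa [ne2' x hxI] at h'
    rw [hassoc] at hub
    rwa [hcomm] at hub
  -- main facts about F = U₁ x y
  set F := U₁ x y with hF_def
  have hFI : F ∈ Icc (0:ℝ) 1 := cl1 x hxI y hyI
  have hxF : x ≤ F := by
    have := mo1 x hxI e₁ he₁I x hxI y hyI le_rfl hy.1
    rwa [ne1' x hxI] at this
  have hFy : F ≤ y := by
    have := mo1 x hxI y hyI e₁ he₁I y hyI hxe₁ le_rfl
    rwa [ne1 y hyI] at this
  -- M2 : U₂ y F = F
  have hM2 : U₂ y F = F := by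
    have := hd y hyI e₁ he₁I x hxI
    rw [hdeqx, ne1' y hyI, cm1 y hyI x hxI, ← hF_def] at this
    exact this.symm
  -- M3 : U₂ x F = F
  have hM3 : U₂ x F = F := by
    have hdist := hd x hxI e₁ he₁I y hyI
    rw [ne1' x hxI, ← hF_def] at hdist
    have hγI : U₂ e₁ y ∈ Icc (0:ℝ) 1 := cl2 e₁ he₁I y hyI
    have hγge : y ≤ U₂ e₁ y := by
      have := mo2 e₂ he₂I y hyI e₁ he₁I y hyI he21 le_rfl
      rwa [ne2 y hyI] at this
    have hlb : F ≤ U₁ x (U₂ e₁ y) :=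
      mo1 x hxI y hyI x hxI (U₂ e₁ y) hγI le_rfl hγge
    have hub : U₂ x F ≤ F := by
      have := mo2 x hxI F hFI e₂ he₂I F hFI hxe₂ le_rfl
      rwa [ne2 F hFI] at this
    rw [hdist] at hlb
    exact le_antisymm hub hlb
  rcases le_or_gt e₂ F with hc | hc
  · -- F ≥ e₂ : F = y
    have hyF : y ≤ F := by
      have := mo2 y hyI e₂ he₂I y hyI F hFI le_rfl hc
      rw [ne2' y hyI, hM2] at this
      exact this
    have hFy' : F = y := le_antisymm hFy hyF
    have : U₂ x y = F := by rw [← hFy']; exact hM3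
    exact ⟨this.symm, Or.inr hFy'⟩
  · -- F < e₂ : F = x
    have hFx : F ≤ x := by
      have hlb : x ≤ U₂ x F := by
        have := mo2 x hxI x hxI x hxI F hFI le_rfl hxF
        rwa [hxx] at this
      have hub : U₂ x F ≤ x := by
        have := mo2 x hxI F hFI x hxI e₂ he₂I le_rfl hc.le
        rwa [ne2' x hxI] at this
      rw [hM3] at hlb hub
      exact hub
    have hFx' : F = x := le_antisymm hFx hxF
    have : U₂ x y = F := by
      rw [cm2 x hxI y hyI, ← hM2, hFx']
    exact ⟨this.symm, Or.inl hFx'⟩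
end

section
/- Let 0 < e₂ < e₁ < 1 and let U₁, U₂ be uninorms on [0,1] with neutral elements e₁, e₂ respectively, such that U₁ is distributive over U₂. If U₂(x₀,y₀) = y₀ for some x₀ ∈ [0,e₂) and y₀ ∈ [e₁,1], then U₂(y₀,y₀) = y₀. -/
open Set

theorem stmt9 (U₁ U₂ : ℝ → ℝ → ℝ) (e₁ e₂ : ℝ)
    (h0 : 0 < e₂) (h21 : e₂ < e₁) (h1 : e₁ < 1)
    (hU₁ : IsUninorm U₁ e₁) (hU₂ : IsUninorm U₂ e₂)
    (hd : DistributiveOver U₁ U₂)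
    (x₀ y₀ : ℝ) (hx₀ : x₀ ∈ Ico (0:ℝ) e₂) (hy₀ : y₀ ∈ Icc e₁ 1)
    (h : U₂ x₀ y₀ = y₀) :
    U₂ y₀ y₀ = y₀ := by
  obtain ⟨he1m, B1, C1, A1, M1, N1⟩ := hU₁
  obtain ⟨he2m, B2, C2, A2, M2, N2⟩ := hU₂
  have hx : x₀ ∈ Icc (0:ℝ) 1 := ⟨hx₀.1, by linarith [hx₀.2]⟩
  have hy : y₀ ∈ Icc (0:ℝ) 1 := ⟨by linarith [hy₀.1, he1m.1], hy₀.2⟩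
  -- U₂ e₁ e₂ = e₁
  have h1a : U₂ e₁ e₂ = e₁ := by
    rw [C2 e₁ he1m e₂ he2m]; exact N2 e₁ he1m
  -- U₁ e₂ e₁ = e₂ and U₁ x e₁ = x generally
  have hxe1 : ∀ x ∈ Icc (0:ℝ) 1, U₁ x e₁ = x := fun x hxm => by
    rw [C1 x hxm e₁ he1m]; exact N1 x hxm
  have h1b : U₁ e₂ e₁ = e₂ := hxe1 e₂ he2m
  -- F1 : U₁ e₂ e₂ = e₂
  have hee : U₁ e₂ e₂ ∈ Icc (0:ℝ) 1 := B1 e₂ he2m e₂ he2m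
  have F1 : U₁ e₂ e₂ = e₂ := by
    have hdist1 := hd e₂ he2m e₁ he1m e₂ he2m
    rw [h1a, h1b] at hdist1
    rw [N2 _ hee] at hdist1
    exact hdist1.symm
  -- F2 : U₁ e₂ x₀ ≤ x₀
  have hw : U₁ e₂ x₀ ∈ Icc (0:ℝ) 1 := B1 e₂ he2m x₀ hx
  have F2 : U₁ e₂ x₀ ≤ x₀ := by
    have := M1 e₂ he2m x₀ hx e₁ he1m x₀ hx h21.le le_rfl
    rwa [N1 x₀ hx] at this
  -- m := U₂ x₀ e₁
  have hm : U₂ x₀ e₁ ∈ Icc (0:ℝ) 1 := B2 x₀ hx e₁ he1m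
  -- F3 : U₁ e₂ (U₂ x₀ e₁) = U₁ e₂ x₀
  have F3 : U₁ e₂ (U₂ x₀ e₁) = U₁ e₂ x₀ := by
    have hdist2 := hd e₂ he2m x₀ hx e₁ he1m
    rw [h1b, C2 _ hw e₂ he2m, N2 _ hw] at hdist2
    exact hdist2
  -- F4 : U₂ x₀ e₁ ≤ e₂
  have F4 : U₂ x₀ e₁ ≤ e₂ := by
    by_contra hcon
    push_neg at hcon
    have : U₁ e₂ e₂ ≤ U₁ e₂ (U₂ x₀ e₁) :=
      M1 e₂ he2m e₂ he2m e₂ he2m (U₂ x₀ e₁) hm le_rfl hcon.le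
    rw [F1, F3] at this
    linarith [hx₀.2, F2]
  -- F5 : U₂ e₁ (U₂ x₀ e₁) ≤ e₁
  have F5 : U₂ e₁ (U₂ x₀ e₁) ≤ e₁ := by
    have := M2 e₁ he1m (U₂ x₀ e₁) hm e₁ he1m e₂ he2m le_rfl F4
    rwa [h1a] at this
  -- q := U₁ y₀ x₀
  have hq : U₁ y₀ x₀ ∈ Icc (0:ℝ) 1 := B1 y₀ hy x₀ hx
  have F6 : x₀ ≤ U₁ y₀ x₀ := by
    have := M1 e₁ he1m x₀ hx y₀ hy x₀ hx hy₀.1 le_rfl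
    rwa [N1 x₀ hx] at this
  have F7 : y₀ ≤ U₂ (U₁ y₀ x₀) y₀ := by
    have := M2 x₀ hx y₀ hy (U₁ y₀ x₀) hq y₀ hy F6 le_rfl
    rwa [h] at this
  -- F8 : U₁ y₀ (U₂ x₀ e₁) = U₂ (U₁ y₀ x₀) y₀
  have hye1 : U₁ y₀ e₁ = y₀ := hxe1 y₀ hy
  have F8 : U₁ y₀ (U₂ x₀ e₁) = U₂ (U₁ y₀ x₀) y₀ := by
    have hdist3 := hd y₀ hy x₀ hx e₁ he1m
    rwa [hye1] at hdist3
  -- F9 : U₁ y₀ (U₂ x₀ e₁) ≤ y₀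
  have F9 : U₁ y₀ (U₂ x₀ e₁) ≤ y₀ := by
    have := M1 y₀ hy (U₂ x₀ e₁) hm y₀ hy e₁ he1m le_rfl (le_trans F4 h21.le)
    rwa [hye1] at this
  -- F10 : U₂ (U₁ y₀ x₀) y₀ = y₀ and U₁ y₀ (U₂ x₀ e₁) = y₀
  have F10 : U₂ (U₁ y₀ x₀) y₀ = y₀ := le_antisymm (F8 ▸ F9) F7
  have F10' : U₁ y₀ (U₂ x₀ e₁) = y₀ := by rw [F8, F10]
  -- F11 : U₁ y₀ (U₂ e₁ (U₂ x₀ e₁)) = U₂ y₀ y₀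
  have F11 : U₁ y₀ (U₂ e₁ (U₂ x₀ e₁)) = U₂ y₀ y₀ := by
    have hdist4 := hd y₀ hy e₁ he1m (U₂ x₀ e₁) hm
    rwa [hye1, F10'] at hdist4
  -- F12 : U₂ y₀ y₀ ≤ y₀
  have hem : U₂ e₁ (U₂ x₀ e₁) ∈ Icc (0:ℝ) 1 := B2 e₁ he1m (U₂ x₀ e₁) hm
  have F12 : U₂ y₀ y₀ ≤ y₀ := by
    rw [← F11]
    have := M1 y₀ hy (U₂ e₁ (U₂ x₀ e₁)) hem y₀ hy e₁ he1m le_rfl F5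
    rwa [hye1] at this
  -- F13 : y₀ ≤ U₂ y₀ y₀
  have F13 : y₀ ≤ U₂ y₀ y₀ := by
    have := M2 e₂ he2m y₀ hy y₀ hy y₀ hy (by linarith [hy₀.1]) le_rfl
    rwa [N2 y₀ hy] at this
  exact le_antisymm F12 F13
end

section
/- Let 0 < e₂ < e₁ < 1 and let U₁, U₂ be uninorms on [0,1] with neutral elements e₁, e₂ respectively, such that U₁ is distributive over U₂. Then U₁(e₂,e₂) = e₂, i.e., e₂ is an idempotent element of U₁. -/
open Set

theorem stmt10 (U₁ U₂ : ℝ → ℝ → ℝ) (e₁ e₂ : ℝ)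
    (h0 : 0 < e₂) (h21 : e₂ < e₁) (h1 : e₁ < 1)
    (hU₁ : IsUninorm U₁ e₁) (hU₂ : IsUninorm U₂ e₂)
    (hd : DistributiveOver U₁ U₂) :
    U₁ e₂ e₂ = e₂ := by
  obtain ⟨he₁, hr₁, hc₁, _, _, hn₁⟩ := hU₁
  obtain ⟨he₂m, _, hc₂, _, _, hn₂⟩ := hU₂
  have he₂ : e₂ ∈ Icc (0:ℝ) 1 := ⟨h0.le, (h21.trans h1).le⟩
  have key := hd e₂ he₂ e₂ he₂ e₁ he₁
  have h1' : U₂ e₂ e₁ = e₁ := hn₂ e₁ he₁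
  have h2' : U₁ e₂ e₁ = e₂ := by rw [hc₁ e₂ he₂ e₁ he₁]; exact hn₁ e₂ he₂
  have ha : U₁ e₂ e₂ ∈ Icc (0:ℝ) 1 := hr₁ e₂ he₂ e₂ he₂
  rw [h1', h2'] at key
  rw [hc₂ _ ha e₂ he₂, hn₂ _ ha] at key
  exact key.symm
end

section
/- Let 0 < e₂ < e₁ < 1 and let U₁, U₂ be uninorms on [0,1] with neutral elements e₁, e₂ respectively, such that U₁ is distributive over U₂. Define Ũ(x,y) = (U₁(e₂ + (1−e₂)x, e₂ + (1−e₂)y) − e₂)/(1−e₂) for x,y ∈ [0,1]. Then Ũ is a uninorm with neutral element (e₁−e₂)/(1−e₂), and Ũ is distributive over the operation S(x,y) = (U₂(e₂ + (1−e₂)x, e₂ + (1−e₂)y) − e₂)/(1−e₂). -/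
/-!
Writing `x = U₁ x e₁ = U₁ x (U₂ e₁ e₂)` and distributing gives `x = U₂ x (U₁ x e₂)`; at `x = e₂`
this says that `e₂` is an idempotent of `U₁`. By monotonicity `U₁` then maps `[e₂, 1]²` into
`[e₂, 1]`, so its restriction to that square, rescaled affinely onto `[0, 1]²`, is again a uninorm,
and distributivity survives the rescaling because the affine map is a bijection.
-/

open Set

/-- The operation `U` restricted to `[a, 1]²` and transported to `[0, 1]²` by `x ↦ a + (1 - a) x`. -/
noncomputable def rescale (a : ℝ) (U : ℝ → ℝ → ℝ) (x y : ℝ) : ℝ :=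
  (U (a + (1 - a) * x) (a + (1 - a) * y) - a) / (1 - a)

section Affine

variable {a x : ℝ}

theorem add_one_sub_mul_div_sub (ha : a ≠ 1) (b : ℝ) : a + (1 - a) * ((b - a) / (1 - a)) = b := by
  field_simp [sub_ne_zero.mpr (Ne.symm ha)]
  ring

theorem sub_div_one_sub_mem_Icc {b : ℝ} (ha : a < 1) (hab : a ≤ b) (hb : b ≤ 1) :
    (b - a) / (1 - a) ∈ Icc (0 : ℝ) 1 :=
  ⟨div_nonneg (by linarith) (by linarith), (div_le_one (by linarith)).mpr (by linarith)⟩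

theorem le_add_one_sub_mul (ha : a ≤ 1) (hx : 0 ≤ x) : a ≤ a + (1 - a) * x := by
  nlinarith

theorem add_one_sub_mul_mem_Icc (ha : a ∈ Icc (0 : ℝ) 1) (hx : x ∈ Icc (0 : ℝ) 1) :
    a + (1 - a) * x ∈ Icc (0 : ℝ) 1 :=
  ⟨ha.1.trans (le_add_one_sub_mul ha.2 hx.1), by nlinarith [ha.2, hx.2]⟩

end Affine

variable {U U₁ U₂ : ℝ → ℝ → ℝ} {a e e₁ e₂ : ℝ}

theorem IsUninorm.apply_neutral_right (hU : IsUninorm U e) {x : ℝ} (hx : x ∈ Icc (0 : ℝ) 1) :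
    U x e = x := by
  rw [hU.2.2.1 x hx e hU.1, hU.2.2.2.2.2 x hx]

theorem DistributiveOver.idempotent_neutral (hU₁ : IsUninorm U₁ e₁) (hU₂ : IsUninorm U₂ e₂)
    (hd : DistributiveOver U₁ U₂) : U₁ e₂ e₂ = e₂ := by
  have he₂ := hU₂.1
  have h := hd e₂ he₂ e₁ hU₁.1 e₂ he₂
  rwa [hU₂.apply_neutral_right hU₁.1, hU₁.apply_neutral_right he₂,
    hU₂.2.2.2.2.2 _ (hU₁.2.1 e₂ he₂ e₂ he₂), eq_comm] at h

theorem isUninorm_rescale (hU : IsUninorm U e) (ha : a ∈ Ico (0 : ℝ) 1) (hae : a ≤ e)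
    (hidem : U a a = a) : IsUninorm (rescale a U) ((e - a) / (1 - a)) := by
  obtain ⟨he, hrange, hcomm, hassoc, hmono, hneutral⟩ := hU
  have ha' : a ∈ Icc (0 : ℝ) 1 := Ico_subset_Icc_self ha
  have hφ : ∀ x ∈ Icc (0 : ℝ) 1, a + (1 - a) * x ∈ Icc (0 : ℝ) 1 :=
    fun x hx => add_one_sub_mul_mem_Icc ha' hx
  have hinv := add_one_sub_mul_div_sub ha.2.ne
  refine ⟨sub_div_one_sub_mem_Icc ha.2 hae he.2, ?_, ?_, ?_, ?_, ?_⟩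
  · intro x hx y hy
    refine sub_div_one_sub_mem_Icc ha.2 ?_ (hrange _ (hφ x hx) _ (hφ y hy)).2
    calc a = U a a := hidem.symm
      _ ≤ _ := hmono a ha' a ha' _ (hφ x hx) _ (hφ y hy)
        (le_add_one_sub_mul ha'.2 hx.1) (le_add_one_sub_mul ha'.2 hy.1)
  · intro x hx y hy
    rw [rescale, hcomm _ (hφ x hx) _ (hφ y hy), rescale]
  · intro x hx y hy z hz
    simp only [rescale, hinv, hassoc _ (hφ x hx) _ (hφ y hy) _ (hφ z hz)]
  · intro x hx y hy x' hx' y' hy' hxx' hyy'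
    have h1a : 0 ≤ 1 - a := by linarith [ha.2]
    unfold rescale
    gcongr
    exact hmono _ (hφ x hx) _ (hφ y hy) _ (hφ x' hx') _ (hφ y' hy') (by gcongr) (by gcongr)
  · intro x hx
    rw [rescale, hinv, hneutral _ (hφ x hx)]
    field_simp [sub_ne_zero.mpr ha.2.ne']
    ring

theorem distributiveOver_rescale (hd : DistributiveOver U₁ U₂) (ha : a ∈ Ico (0 : ℝ) 1) :
    DistributiveOver (rescale a U₁) (rescale a U₂) := by
  intro x hx y hy z hz
  have hφ : ∀ x ∈ Icc (0 : ℝ) 1, a + (1 - a) * x ∈ Icc (0 : ℝ) 1 :=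
    fun x hx => add_one_sub_mul_mem_Icc (Ico_subset_Icc_self ha) hx
  simp only [rescale, add_one_sub_mul_div_sub ha.2.ne,
    hd _ (hφ x hx) _ (hφ y hy) _ (hφ z hz)]

theorem stmt11_general (U₁ U₂ : ℝ → ℝ → ℝ) (e₁ e₂ : ℝ)
    (h21 : e₂ < e₁)
    (hU₁ : IsUninorm U₁ e₁) (hU₂ : IsUninorm U₂ e₂)
    (hd : DistributiveOver U₁ U₂) :
    IsUninorm
      (fun x y => (U₁ (e₂ + (1 - e₂) * x) (e₂ + (1 - e₂) * y) - e₂) / (1 - e₂))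
      ((e₁ - e₂) / (1 - e₂)) ∧
    DistributiveOver
      (fun x y => (U₁ (e₂ + (1 - e₂) * x) (e₂ + (1 - e₂) * y) - e₂) / (1 - e₂))
      (fun x y => (U₂ (e₂ + (1 - e₂) * x) (e₂ + (1 - e₂) * y) - e₂) / (1 - e₂)) := by
  have he₂ : e₂ ∈ Ico (0 : ℝ) 1 := ⟨hU₂.1.1, h21.trans_le hU₁.1.2⟩
  exact ⟨isUninorm_rescale hU₁ he₂ h21.le (hd.idempotent_neutral hU₁ hU₂), distributiveOver_rescale hd he₂⟩

theorem stmt11 (U₁ U₂ : ℝ → ℝ → ℝ) (e₁ e₂ : ℝ)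
    (h0 : 0 < e₂) (h21 : e₂ < e₁) (h1 : e₁ < 1)
    (hU₁ : IsUninorm U₁ e₁) (hU₂ : IsUninorm U₂ e₂)
    (hd : DistributiveOver U₁ U₂) :
    IsUninorm
      (fun x y => (U₁ (e₂ + (1 - e₂) * x) (e₂ + (1 - e₂) * y) - e₂) / (1 - e₂))
      ((e₁ - e₂) / (1 - e₂)) ∧
    DistributiveOver
      (fun x y => (U₁ (e₂ + (1 - e₂) * x) (e₂ + (1 - e₂) * y) - e₂) / (1 - e₂))
      (fun x y => (U₂ (e₂ + (1 - e₂) * x) (e₂ + (1 - e₂) * y) - e₂) / (1 - e₂)) :=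
  stmt11_general U₁ U₂ e₁ e₂ h21 hU₁ hU₂ hd
end

section
/- Let 0 < e₂ < e₁ < 1 and let U₁, U₂ be uninorms on [0,1] with neutral elements e₁, e₂ respectively. If U₁ is distributive over U₂, then U₂ is locally internal on A(e₂), i.e., U₂(x,y) ∈ {x,y} whenever min(x,y) < e₂ < max(x,y) or (x,y) ∈ A(e₂). -/
open Set

lemma key_aux (U₁ U₂ : ℝ → ℝ → ℝ) (e₁ e₂ : ℝ)
    (h0 : 0 < e₂) (h21 : e₂ < e₁) (h1 : e₁ < 1)
    (hU₁ : IsUninorm U₁ e₁) (hU₂ : IsUninorm U₂ e₂)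
    (hd : DistributiveOver U₁ U₂)
    (x y : ℝ) (hx : x ∈ Icc (0:ℝ) 1) (hy : y ∈ Icc (0:ℝ) 1)
    (hx2 : x < e₂) (h2y : e₂ < y) : U₂ x y = x ∨ U₂ x y = y := by
  obtain ⟨he₂I, hcl₂, hcomm₂, hassoc₂, hmono₂, hneu₂⟩ := hU₂
  obtain ⟨he₁I, hcl₁, hcomm₁, hassoc₁, hmono₁, hneu₁⟩ := hU₁
  -- right neutrality
  have nr₂ : ∀ a ∈ Icc (0:ℝ) 1, U₂ a e₂ = a := fun a ha => by
    rw [hcomm₂ a ha e₂ he₂I]; exact hneu₂ a ha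
  have nr₁ : ∀ a ∈ Icc (0:ℝ) 1, U₁ a e₁ = a := fun a ha => by
    rw [hcomm₁ a ha e₁ he₁I]; exact hneu₁ a ha
  -- one sided monotonicity
  have m₂l : ∀ u ∈ Icc (0:ℝ) 1, ∀ v ∈ Icc (0:ℝ) 1, ∀ w ∈ Icc (0:ℝ) 1,
      u ≤ v → U₂ u w ≤ U₂ v w := fun u hu v hv w hw h =>
    hmono₂ u hu w hw v hv w hw h le_rfl
  have m₂r : ∀ u ∈ Icc (0:ℝ) 1, ∀ v ∈ Icc (0:ℝ) 1, ∀ w ∈ Icc (0:ℝ) 1,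
      v ≤ w → U₂ u v ≤ U₂ u w := fun u hu v hv w hw h =>
    hmono₂ u hu v hv u hu w hw le_rfl h
  have m₁l : ∀ u ∈ Icc (0:ℝ) 1, ∀ v ∈ Icc (0:ℝ) 1, ∀ w ∈ Icc (0:ℝ) 1,
      u ≤ v → U₁ u w ≤ U₁ v w := fun u hu v hv w hw h =>
    hmono₁ u hu w hw v hv w hw h le_rfl
  have m₁r : ∀ u ∈ Icc (0:ℝ) 1, ∀ v ∈ Icc (0:ℝ) 1, ∀ w ∈ Icc (0:ℝ) 1,
      v ≤ w → U₁ u v ≤ U₁ u w := fun u hu v hv w hw h =>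
    hmono₁ u hu v hv u hu w hw le_rfl h
  -- `d t = U₁ t e₂` is a U₂-idempotent
  have hdI : ∀ t ∈ Icc (0:ℝ) 1, U₁ t e₂ ∈ Icc (0:ℝ) 1 := fun t ht => hcl₁ t ht e₂ he₂I
  have hidem : ∀ t ∈ Icc (0:ℝ) 1, U₂ (U₁ t e₂) (U₁ t e₂) = U₁ t e₂ := by
    intro t ht
    have h := hd t ht e₂ he₂I e₂ he₂I
    rw [hneu₂ e₂ he₂I] at h
    exact h.symm
  -- star : U₂ (U₁ t e₂) (U₁ t s) = U₁ t s
  have hstar : ∀ t ∈ Icc (0:ℝ) 1, ∀ s ∈ Icc (0:ℝ) 1,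
      U₂ (U₁ t e₂) (U₁ t s) = U₁ t s := by
    intro t ht s hs
    have h := hd t ht s hs e₂ he₂I
    rw [nr₂ s hs] at h
    rw [hcomm₂ (U₁ t e₂) (hdI t ht) (U₁ t s) (hcl₁ t ht s hs)]
    exact h.symm
  -- d t ≤ t
  have hdle : ∀ t ∈ Icc (0:ℝ) 1, U₁ t e₂ ≤ t := by
    intro t ht
    have := m₁r t ht e₂ he₂I e₁ he₁I (le_of_lt h21)
    rwa [nr₁ t ht] at this
  -- lower absorption for idempotents
  have hlow : ∀ p ∈ Icc (0:ℝ) 1, ∀ w ∈ Icc (0:ℝ) 1, U₂ p p = p → p ≤ w → w ≤ e₂ →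
      U₂ p w = p := by
    intro p hp w hw hip hpw hwe
    refine le_antisymm ?_ ?_
    · have := m₂r p hp w hw e₂ he₂I hwe
      rwa [nr₂ p hp] at this
    · have := m₂r p hp p hp w hw hpw
      rwa [hip] at this
  -- d fixes [0, e₂]
  have hdfix : ∀ t ∈ Icc (0:ℝ) 1, t ≤ e₂ → U₁ t e₂ = t := by
    intro t ht hte
    have h1 := hstar t ht e₁ he₁I
    rw [nr₁ t ht] at h1
    have h2 := hlow (U₁ t e₂) (hdI t ht) t ht (hidem t ht) (hdle t ht) hte
    rw [h1] at h2
    exact h2.symm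
  -- c = U₂ e₁ e₁
  set c := U₂ e₁ e₁ with hcdef
  have hcI : c ∈ Icc (0:ℝ) 1 := hcl₂ e₁ he₁I e₁ he₁I
  have hcsq : ∀ t ∈ Icc (0:ℝ) 1, U₁ t c = U₂ t t := by
    intro t ht
    have h := hd t ht e₁ he₁I e₁ he₁I
    rw [nr₁ t ht] at h
    exact h
  have hce : e₁ ≤ c := by
    have := m₂l e₂ he₂I e₁ he₁I e₁ he₁I (le_of_lt h21)
    rwa [hneu₂ e₁ he₁I] at this
  -- d c = e₂
  have hdc : U₁ c e₂ = e₂ := by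
    have h := hcsq e₂ he₂I
    rw [nr₂ e₂ he₂I] at h
    rw [hcomm₁ c hcI e₂ he₂I]
    exact h
  have hde₂ : U₁ e₂ e₂ = e₂ := hdfix e₂ he₂I le_rfl
  -- d is constantly e₂ on [e₂, c]
  have hdmid : ∀ w ∈ Icc (0:ℝ) 1, e₂ ≤ w → w ≤ c → U₁ w e₂ = e₂ := by
    intro w hw h1 h2
    refine le_antisymm ?_ ?_
    · have := m₁l w hw c hcI e₂ he₂I h2
      rwa [hdc] at this
    · have := m₁l e₂ he₂I w hw e₂ he₂I h1
      rwa [hde₂] at this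
  -- d is a U₂-homomorphism
  have hhom : ∀ u ∈ Icc (0:ℝ) 1, ∀ v ∈ Icc (0:ℝ) 1,
      U₁ (U₂ u v) e₂ = U₂ (U₁ u e₂) (U₁ v e₂) := by
    intro u hu v hv
    have h := hd e₂ he₂I u hu v hv
    rw [hcomm₁ e₂ he₂I u hu, hcomm₁ e₂ he₂I v hv,
      hcomm₁ e₂ he₂I (U₂ u v) (hcl₂ u hu v hv)] at h
    exact h
  have hdxx : U₁ x e₂ = x := hdfix x hx (le_of_lt hx2)
  have hxx : U₂ x x = x := by
    have := hidem x hx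
    rwa [hdxx] at this
  -- special mid-range case : U₂ x y' = x whenever e₂ ≤ y' ≤ c
  have hxmid : ∀ y' ∈ Icc (0:ℝ) 1, e₂ ≤ y' → y' ≤ c → U₂ x y' = x := by
    intro y' hy' h1 h2
    have haI : U₂ x y' ∈ Icc (0:ℝ) 1 := hcl₂ x hx y' hy'
    have hxa : x ≤ U₂ x y' := by
      have := m₂r x hx e₂ he₂I y' hy' h1
      rwa [nr₂ x hx] at this
    rcases le_or_gt (U₂ x y') e₂ with hle | hlt
    · -- then U₂ x (U₂ x y') = U₂ x y' and absorption gives the claim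
      have hxa' : U₂ x (U₂ x y') = U₂ x y' := by
        rw [← hassoc₂ x hx x hx y' hy', hxx]
      have := hlow x hx (U₂ x y') haI hxx hxa hle
      rw [hxa'] at this
      exact this
    · exfalso
      have hac : U₂ x y' ≤ c := by
        have h3 := m₂l x hx e₂ he₂I y' hy' (le_of_lt hx2)
        rw [hneu₂ y' hy'] at h3
        linarith
      have hda : U₁ (U₂ x y') e₂ = e₂ := hdmid _ haI (le_of_lt hlt) hac
      have hdy' : U₁ y' e₂ = e₂ := hdmid y' hy' h1 h2
      have h := hhom x hx y' hy'
      rw [hda, hdxx, hdy', nr₂ x hx] at h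
      linarith
  -- main argument
  set a := U₂ x y with hadef
  have haI : a ∈ Icc (0:ℝ) 1 := hcl₂ x hx y hy
  have hxa : x ≤ a := by
    have := m₂r x hx e₂ he₂I y hy (le_of_lt h2y)
    rwa [nr₂ x hx] at this
  have hay : a ≤ y := by
    have := m₂l x hx e₂ he₂I y hy (le_of_lt hx2)
    rwa [hneu₂ y hy] at this
  rcases le_or_gt y c with hyc | hcy
  · left; exact hxmid y hy (le_of_lt h2y) hyc
  · rcases le_or_gt a e₂ with hle | hlt
    · left
      have hxa' : U₂ x a = a := by
        rw [hadef, ← hassoc₂ x hx x hx y hy, hxx]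
      have := hlow x hx a haI hxx hxa hle
      rw [hxa'] at this
      exact this
    · right
      -- q = U₁ y e₂
      set q := U₁ y e₂ with hqdef
      have hqI : q ∈ Icc (0:ℝ) 1 := hdI y hy
      have he₂q : e₂ ≤ q := by
        have := m₁l e₂ he₂I y hy e₂ he₂I (le_of_lt h2y)
        rwa [hde₂] at this
      have hqy : U₂ q y = y := by
        have := hstar y hy e₁ he₁I
        rwa [nr₁ y hy] at this
      have hqa : U₂ q a = a := by
        calc U₂ q a = U₂ (U₂ q x) y := by rw [hadef, hassoc₂ q hqI x hx y hy]
        _ = U₂ (U₂ x q) y := by rw [hcomm₂ q hqI x hx]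
        _ = U₂ x (U₂ q y) := hassoc₂ x hx q hqI y hy
        _ = a := by rw [hqy]
      have hqa' : q ≤ a := by
        have := m₂r q hqI e₂ he₂I a haI (le_of_lt hlt)
        rw [nr₂ q hqI, hqa] at this
        exact this
      have hxe₁ : U₂ x e₁ = x := hxmid e₁ he₁I (le_of_lt h21) hce
      have he₁y : e₁ ≤ y := le_trans hce (le_of_lt hcy)
      set b := U₁ x y with hbdef
      have hbI : b ∈ Icc (0:ℝ) 1 := hcl₁ x hx y hy
      have hxb : x ≤ b := by
        have := m₁r x hx e₁ he₁I y hy he₁y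
        rwa [nr₁ x hx] at this
      have hbq : b ≤ q := by
        have := m₁l x hx e₂ he₂I y hy (le_of_lt hx2)
        rw [hcomm₁ e₂ he₂I y hy] at this
        exact this
      have hby : U₂ b y = b := by
        have h := hd y hy x hx e₁ he₁I
        rw [hxe₁, nr₁ y hy, hcomm₁ y hy x hx] at h
        exact h.symm
      have hab : a ≤ b := by
        have := m₂l x hx b hbI y hy hxb
        rwa [hby] at this
      have haeb : a = b := le_antisymm hab (le_trans hbq hqa')
      have hya : y ≤ a := by
        have h' := m₂l e₂ he₂I a haI y hy (le_of_lt hlt)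
        rw [hneu₂ y hy] at h'
        calc y ≤ U₂ a y := h'
        _ = U₂ b y := by rw [haeb]
        _ = b := hby
        _ = a := haeb.symm
      exact le_antisymm hay hya

theorem stmt12 (U₁ U₂ : ℝ → ℝ → ℝ) (e₁ e₂ : ℝ)
    (h0 : 0 < e₂) (h21 : e₂ < e₁) (h1 : e₁ < 1)
    (hU₁ : IsUninorm U₁ e₁) (hU₂ : IsUninorm U₂ e₂)
    (hd : DistributiveOver U₁ U₂)
    (x y : ℝ) (hx : x ∈ Icc (0:ℝ) 1) (hy : y ∈ Icc (0:ℝ) 1)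
    (h : (min x y < e₂ ∧ e₂ < max x y) ∨
      (x, y) ∈ (Icc (0:ℝ) 1 ×ˢ Icc (0:ℝ) 1) \
        (Icc (0:ℝ) e₂ ×ˢ Icc (0:ℝ) e₂ ∪ Icc e₂ 1 ×ˢ Icc e₂ 1)) :
    U₂ x y = x ∨ U₂ x y = y := by
  have horient : (x < e₂ ∧ e₂ < y) ∨ (y < e₂ ∧ e₂ < x) := by
    rcases h with ⟨hmin, hmax⟩ | ⟨_, hnot⟩
    · rcases le_total x y with hxy | hxy
      · left; rw [min_eq_left hxy] at hmin; rw [max_eq_right hxy] at hmax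
        exact ⟨hmin, hmax⟩
      · right; rw [min_eq_right hxy] at hmin; rw [max_eq_left hxy] at hmax
        exact ⟨hmin, hmax⟩
    · have hn1 : ¬(x ≤ e₂ ∧ y ≤ e₂) := fun hc =>
        hnot (Or.inl ⟨⟨hx.1, hc.1⟩, ⟨hy.1, hc.2⟩⟩)
      have hn2 : ¬(e₂ ≤ x ∧ e₂ ≤ y) := fun hc =>
        hnot (Or.inr ⟨⟨hc.1, hx.2⟩, ⟨hc.2, hy.2⟩⟩)
      rcases lt_trichotomy x e₂ with h' | h' | h'
      · left
        refine ⟨h', ?_⟩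
        by_contra hc
        push_neg at hc
        exact hn1 ⟨le_of_lt h', hc⟩
      · exfalso
        rcases le_or_gt e₂ y with h'' | h''
        · exact hn2 ⟨h'.ge, h''⟩
        · exact hn1 ⟨h'.le, h''.le⟩
      · right
        refine ⟨?_, h'⟩
        by_contra hc
        push_neg at hc
        exact hn2 ⟨h'.le, hc⟩
  rcases horient with ⟨ha, hb⟩ | ⟨ha, hb⟩
  · exact key_aux U₁ U₂ e₁ e₂ h0 h21 h1 hU₁ hU₂ hd x y hx hy ha hb
  · have := key_aux U₁ U₂ e₁ e₂ h0 h21 h1 hU₁ hU₂ hd y x hy hx ha hb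
    rw [hU₂.2.2.1 x hx y hy]
    exact this.symm
end

section
/- Let 0 < e₂ < e₁ < 1 and let U₁, U₂ be uninorms on [0,1] with neutral elements e₁, e₂. Suppose: (i) U₁(x,y) = U₂(x,y) ∈ {x,y} for x ∈ [0,e₂), y ∈ [e₂,1], with U₂(y₀,y₀) = y₀ whenever U₂(x₀,y₀) = y₀ for some x₀ ∈ [0,e₂), y₀ ∈ [e₁,1]; (ii) U₁(x,y) = U₂(x,y) = min(x,y) for x ∈ [0,e₂), y ∈ [e₂,e₁]; (iii) U₂(x,y) = min(x,y) on [0,e₂]²; (iv) the rescaled operation Ũ(x,y) = (U₁(e₂+(1−e₂)x, e₂+(1−e₂)y) − e₂)/(1−e₂) is a uninorm with neutral element (e₁−e₂)/(1−e₂) that is distributive over the rescaling S₂ of U₂ restricted to [e₂,1]². Then U₁ is distributive over U₂. -/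
open Set

/-!
On `[e₂, 1]` the identity is hypothesis (iv), transported back by the affine bijection
`a ↦ (a - e₂) / (1 - e₂)` onto `[0, 1]`. Otherwise some argument lies below `e₂`, where both
uninorms are locally internal, and the identity reduces to comparing values: `U₂` is the minimum
on `[0, e₂]`, a mixed product with value `≥ e₂` equals its upper argument, `U₁ y x = x` with
`y < e₂` forces `e₁ ≤ x` and hence `U₂ x x = x`, and multiplication by a `U₂`-idempotent
distributes over `U₂`. The one case that needs (iv) again is `y < e₂ ≤ x, z` with `U₁ x y = x`:
there `U₂ x (U₁ x z) = U₁ x (U₂ e₁ z)` by upper distributivity, and `y` cannot tell `z` from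
`U₂ e₁ z` because `U₂ y e₁ = y`.
-/

namespace IsUninorm

variable {U : ℝ → ℝ → ℝ} {e a b c a' b' : ℝ}

theorem mem_Icc (hU : IsUninorm U e) (ha : a ∈ Icc 0 1) (hb : b ∈ Icc 0 1) :
    U a b ∈ Icc 0 1 :=
  hU.2.1 a ha b hb

theorem comm (hU : IsUninorm U e) (ha : a ∈ Icc 0 1) (hb : b ∈ Icc 0 1) : U a b = U b a :=
  hU.2.2.1 a ha b hb

theorem assoc (hU : IsUninorm U e) (ha : a ∈ Icc 0 1) (hb : b ∈ Icc 0 1) (hc : c ∈ Icc 0 1) :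
    U (U a b) c = U a (U b c) :=
  hU.2.2.2.1 a ha b hb c hc

theorem mono (hU : IsUninorm U e) (ha : a ∈ Icc 0 1) (hb : b ∈ Icc 0 1) (ha' : a' ∈ Icc 0 1)
    (hb' : b' ∈ Icc 0 1) (haa' : a ≤ a') (hbb' : b ≤ b') : U a b ≤ U a' b' :=
  hU.2.2.2.2.1 a ha b hb a' ha' b' hb' haa' hbb'

theorem neutral_left (hU : IsUninorm U e) (ha : a ∈ Icc 0 1) : U e a = a :=
  hU.2.2.2.2.2 a ha

theorem neutral_right (hU : IsUninorm U e) (ha : a ∈ Icc 0 1) : U a e = a :=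
  (hU.comm ha hU.1).trans (hU.neutral_left ha)

theorem apply_le_of_le_neutral (hU : IsUninorm U e) (ha : a ∈ Icc 0 1) (hb : b ∈ Icc 0 1)
    (hbe : b ≤ e) : U a b ≤ a := by
  simpa only [hU.neutral_right ha] using hU.mono ha hb ha hU.1 le_rfl hbe

theorem le_apply_of_neutral_le (hU : IsUninorm U e) (ha : a ∈ Icc 0 1) (hb : b ∈ Icc 0 1)
    (heb : e ≤ b) : a ≤ U a b := by
  simpa only [hU.neutral_right ha] using hU.mono ha hU.1 ha hb le_rfl heb

theorem mapsTo_Icc_neutral (hU : IsUninorm U e) (ha : a ∈ Icc e 1) (hb : b ∈ Icc e 1) :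
    U a b ∈ Icc e 1 := by
  have ha₀ : a ∈ Icc (0 : ℝ) 1 := ⟨hU.1.1.trans ha.1, ha.2⟩
  have hb₀ : b ∈ Icc (0 : ℝ) 1 := ⟨hU.1.1.trans hb.1, hb.2⟩
  exact ⟨ha.1.trans (hU.le_apply_of_neutral_le ha₀ hb₀ hb.1), (hU.mem_Icc ha₀ hb₀).2⟩

theorem apply_distrib_of_idem (hU : IsUninorm U e) (ha : a ∈ Icc 0 1) (hb : b ∈ Icc 0 1)
    (hc : c ∈ Icc 0 1) (haa : U a a = a) : U a (U b c) = U (U a b) (U a c) := by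
  rw [hU.assoc ha hb (hU.mem_Icc ha hc), ← hU.assoc hb ha hc, hU.comm hb ha,
    hU.assoc ha hb hc, ← hU.assoc ha ha (hU.mem_Icc hb hc), haa]

end IsUninorm

def DistributiveOn (s : Set ℝ) (U₁ U₂ : ℝ → ℝ → ℝ) : Prop :=
  ∀ x ∈ s, ∀ y ∈ s, ∀ z ∈ s, U₁ x (U₂ y z) = U₂ (U₁ x y) (U₁ x z)

noncomputable def upperRescale (e : ℝ) (U : ℝ → ℝ → ℝ) (x y : ℝ) : ℝ :=
  (U (e + (1 - e) * x) (e + (1 - e) * y) - e) / (1 - e)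

section Rescale

variable {e : ℝ} {U U₁ U₂ : ℝ → ℝ → ℝ}

theorem upperRescale_apply (he : e ≠ 1) (a b : ℝ) :
    upperRescale e U ((a - e) / (1 - e)) ((b - e) / (1 - e)) = (U a b - e) / (1 - e) := by
  have h : ∀ c : ℝ, e + (1 - e) * ((c - e) / (1 - e)) = c := fun c => by
    field_simp [sub_ne_zero.mpr he.symm]; ring
  simp only [upperRescale, h]

theorem sub_div_mem_Icc (he : e < 1) {a : ℝ} (ha : a ∈ Icc e 1) :
    (a - e) / (1 - e) ∈ Icc 0 1 :=
  ⟨div_nonneg (by linarith [ha.1]) (by linarith),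
    (div_le_one (by linarith)).2 (by linarith [ha.2])⟩

theorem mapsTo_Icc_of_upperRescale (he : e < 1)
    (hU : ∀ x ∈ Icc (0 : ℝ) 1, ∀ y ∈ Icc (0 : ℝ) 1, upperRescale e U x y ∈ Icc 0 1)
    {a b : ℝ} (ha : a ∈ Icc e 1) (hb : b ∈ Icc e 1) : U a b ∈ Icc e 1 := by
  have h := hU _ (sub_div_mem_Icc he ha) _ (sub_div_mem_Icc he hb)
  rw [upperRescale_apply he.ne, mem_Icc, le_div_iff₀ (by linarith), div_le_one (by linarith)]
    at h
  constructor <;> linarith [h.1, h.2]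

theorem distributiveOn_of_upperRescale (he : e ≠ 1)
    (h : DistributiveOver (upperRescale e U₁) (upperRescale e U₂)) :
    DistributiveOn (Icc e 1) U₁ U₂ := by
  intro a ha b hb c hc
  have h1e : (1 : ℝ) - e ≠ 0 := sub_ne_zero.mpr he.symm
  have hlt : e < 1 := lt_of_le_of_ne (ha.1.trans ha.2) he
  have key := h _ (sub_div_mem_Icc hlt ha) _ (sub_div_mem_Icc hlt hb) _ (sub_div_mem_Icc hlt hc)
  simp only [upperRescale_apply he] at key
  rw [div_left_inj' h1e, sub_left_inj] at key
  exact key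

end Rescale

/-- Hypotheses (i)–(iii) of the theorem, together with what is drawn from (iv): `U₁` maps
`[e₂, 1]²` into itself and distributes over `U₂` there. -/
structure LocallyInternalPair (U₁ U₂ : ℝ → ℝ → ℝ) (e₁ e₂ : ℝ) : Prop where
  lt : e₂ < e₁
  uninorm₁ : IsUninorm U₁ e₁
  uninorm₂ : IsUninorm U₂ e₂
  mixed : ∀ x ∈ Ico (0 : ℝ) e₂, ∀ y ∈ Icc e₂ 1, U₁ x y = U₂ x y ∧ (U₁ x y = x ∨ U₁ x y = y)
  idem : ∀ x₀ ∈ Ico (0 : ℝ) e₂, ∀ y₀ ∈ Icc e₁ 1, U₂ x₀ y₀ = y₀ → U₂ y₀ y₀ = y₀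
  min_mid : ∀ x ∈ Ico (0 : ℝ) e₂, ∀ y ∈ Icc e₂ e₁, U₁ x y = min x y ∧ U₂ x y = min x y
  min_low : ∀ x ∈ Icc (0 : ℝ) e₂, ∀ y ∈ Icc (0 : ℝ) e₂, U₂ x y = min x y
  mapsTo₁ : ∀ x ∈ Icc e₂ 1, ∀ y ∈ Icc e₂ 1, U₁ x y ∈ Icc e₂ 1
  distrib_upper : DistributiveOn (Icc e₂ 1) U₁ U₂

namespace LocallyInternalPair

variable {U₁ U₂ : ℝ → ℝ → ℝ} {e₁ e₂ x y z a b : ℝ}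

theorem mem_Icc_of_low (H : LocallyInternalPair U₁ U₂ e₁ e₂) (ha : a ∈ Ico 0 e₂) :
    a ∈ Icc 0 1 :=
  ⟨ha.1, ha.2.le.trans H.uninorm₂.1.2⟩

theorem mem_Icc_of_high (H : LocallyInternalPair U₁ U₂ e₁ e₂) (ha : a ∈ Icc e₂ 1) :
    a ∈ Icc 0 1 :=
  ⟨H.uninorm₂.1.1.trans ha.1, ha.2⟩

theorem mixed_eq_right (H : LocallyInternalPair U₁ U₂ e₁ e₂) (ha : a ∈ Ico 0 e₂)
    (hb : b ∈ Icc e₂ 1) (h : e₂ ≤ U₁ a b) : U₁ a b = b := by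
  rcases (H.mixed a ha b hb).2 with h' | h'
  · linarith [ha.2]
  · exact h'

theorem mixed_eq_left (H : LocallyInternalPair U₁ U₂ e₁ e₂) (ha : a ∈ Ico 0 e₂)
    (hb : b ∈ Icc e₂ 1) (h : U₁ a b < e₂) : U₁ a b = a := by
  rcases (H.mixed a ha b hb).2 with h' | h'
  · exact h'
  · linarith [hb.1]

theorem apply₂_eq_apply₁ (H : LocallyInternalPair U₁ U₂ e₁ e₂) (ha : a ∈ Ico 0 e₂)
    (hb : b ∈ Icc e₂ 1) : U₂ a b = U₁ a b :=
  (H.mixed a ha b hb).1.symm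

theorem apply₂_of_low (H : LocallyInternalPair U₁ U₂ e₁ e₂) (ha : a ∈ Ico 0 e₂)
    (hb : b ∈ Ico 0 e₂) : U₂ a b = min a b :=
  H.min_low a (Ico_subset_Icc_self ha) b (Ico_subset_Icc_self hb)

theorem neutral_le_of_mixed_eq_right (H : LocallyInternalPair U₁ U₂ e₁ e₂) (ha : a ∈ Ico 0 e₂)
    (hb : b ∈ Icc e₂ 1) (h : U₁ a b = b) : e₁ ≤ b := by
  by_contra! hbe
  have hmin := (H.min_mid a ha b ⟨hb.1, hbe.le⟩).1
  rw [min_eq_left (ha.2.le.trans hb.1), h] at hmin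
  linarith [ha.2, hb.1]

theorem distrib_low_low_low (H : LocallyInternalPair U₁ U₂ e₁ e₂) (hx : x ∈ Ico 0 e₂)
    (hy : y ∈ Ico 0 e₂) (hz : z ∈ Ico 0 e₂) (hyz : y ≤ z) :
    U₁ x (U₂ y z) = U₂ (U₁ x y) (U₁ x z) := by
  have hU₁ := H.uninorm₁
  have hx₀ := H.mem_Icc_of_low hx
  have hlow : ∀ w ∈ Ico (0 : ℝ) e₂, U₁ x w ∈ Ico 0 e₂ := fun w hw =>
    ⟨(hU₁.mem_Icc hx₀ (H.mem_Icc_of_low hw)).1,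
      (hU₁.apply_le_of_le_neutral hx₀ (H.mem_Icc_of_low hw) (hw.2.le.trans H.lt.le)).trans_lt
        hx.2⟩
  rw [H.apply₂_of_low hy hz, min_eq_left hyz, H.apply₂_of_low (hlow y hy) (hlow z hz),
    min_eq_left (hU₁.mono hx₀ (H.mem_Icc_of_low hy) hx₀ (H.mem_Icc_of_low hz) le_rfl hyz)]

theorem distrib_low_low_high (H : LocallyInternalPair U₁ U₂ e₁ e₂) (hx : x ∈ Ico 0 e₂)
    (hy : y ∈ Ico 0 e₂) (hz : z ∈ Icc e₂ 1) :
    U₁ x (U₂ y z) = U₂ (U₁ x y) (U₁ x z) := by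
  have hU₁ := H.uninorm₁
  have hx₀ := H.mem_Icc_of_low hx
  have hy₀ := H.mem_Icc_of_low hy
  have hz₀ := H.mem_Icc_of_high hz
  have hux : U₁ x y ≤ x := hU₁.apply_le_of_le_neutral hx₀ hy₀ (hy.2.le.trans H.lt.le)
  have hu : U₁ x y ∈ Ico 0 e₂ := ⟨(hU₁.mem_Icc hx₀ hy₀).1, hux.trans_lt hx.2⟩
  rw [H.apply₂_eq_apply₁ hy hz, ← hU₁.assoc hx₀ hy₀ hz₀]
  rcases (H.mixed x hx z hz).2 with hxz | hxz
  · have huz : U₁ (U₁ x y) z < e₂ := by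
      have h := hU₁.mono (H.mem_Icc_of_low hu) hz₀ hx₀ hz₀ hux le_rfl
      rw [hxz] at h
      exact h.trans_lt hx.2
    rw [H.mixed_eq_left hu hz huz, hxz, H.apply₂_of_low hu hx, min_eq_left hux]
  · rw [hxz, H.apply₂_eq_apply₁ hu hz]

theorem distrib_low_high_high (H : LocallyInternalPair U₁ U₂ e₁ e₂) (hx : x ∈ Ico 0 e₂)
    (hy : y ∈ Icc e₂ 1) (hz : z ∈ Icc e₂ 1) :
    U₁ x (U₂ y z) = U₂ (U₁ x y) (U₁ x z) := by
  have hxx : U₂ x x = x := by rw [H.apply₂_of_low hx hx, min_self]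
  rw [← H.apply₂_eq_apply₁ hx (H.uninorm₂.mapsTo_Icc_neutral hy hz), ← H.apply₂_eq_apply₁ hx hy,
    ← H.apply₂_eq_apply₁ hx hz]
  exact H.uninorm₂.apply_distrib_of_idem (H.mem_Icc_of_low hx) (H.mem_Icc_of_high hy)
    (H.mem_Icc_of_high hz) hxx

theorem distrib_high_low_low (H : LocallyInternalPair U₁ U₂ e₁ e₂) (hx : x ∈ Icc e₂ 1)
    (hy : y ∈ Ico 0 e₂) (hz : z ∈ Ico 0 e₂) (hyz : y ≤ z) :
    U₁ x (U₂ y z) = U₂ (U₁ x y) (U₁ x z) := by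
  have hU₁ := H.uninorm₁
  have hx₀ := H.mem_Icc_of_high hx
  have hy₀ := H.mem_Icc_of_low hy
  have hz₀ := H.mem_Icc_of_low hz
  rw [H.apply₂_of_low hy hz, min_eq_left hyz, hU₁.comm hx₀ hy₀, hU₁.comm hx₀ hz₀]
  rcases (H.mixed y hy x hx).2 with hyx | hyx
  · rcases (H.mixed z hz x hx).2 with hzx | hzx
    · rw [hyx, hzx, H.apply₂_of_low hy hz, min_eq_left hyz]
    · rw [hyx, hzx, H.apply₂_eq_apply₁ hy hx, hyx]
  · -- `y` absorbs into `x`, so `x ≥ e₁` is `U₂`-idempotent and `z ≥ y` absorbs too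
    have hxx : U₂ x x = x := H.idem y hy x ⟨H.neutral_le_of_mixed_eq_right hy hx hyx, hx.2⟩
      ((H.apply₂_eq_apply₁ hy hx).trans hyx)
    have hzx : U₁ z x = x := by
      have h := hU₁.mono hy₀ hx₀ hz₀ hx₀ hyz le_rfl
      rw [hyx] at h
      exact H.mixed_eq_right hz hx (hx.1.trans h)
    rw [hyx, hzx, hxx]

theorem distrib_high_low_high_of_eq_low (H : LocallyInternalPair U₁ U₂ e₁ e₂)
    (hx : x ∈ Icc e₂ 1) (hy : y ∈ Ico 0 e₂) (hz : z ∈ Icc e₂ 1) (hyx : U₁ y x = y) :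
    U₁ x (U₂ y z) = U₂ (U₁ x y) (U₁ x z) := by
  have hU₁ := H.uninorm₁
  have hx₀ := H.mem_Icc_of_high hx
  have hy₀ := H.mem_Icc_of_low hy
  have hxz := H.mapsTo₁ x hx z hz
  have hyxz : U₁ y (U₁ x z) = U₁ y z := by
    rw [← hU₁.assoc hy₀ hx₀ (H.mem_Icc_of_high hz), hyx]
  rw [hU₁.comm hx₀ hy₀, hyx, H.apply₂_eq_apply₁ hy hxz, hyxz, H.apply₂_eq_apply₁ hy hz]
  rcases (H.mixed y hy z hz).2 with hyz | hyz
  · rw [hyz, hU₁.comm hx₀ hy₀, hyx]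
  · have hxzz : U₁ x z = z :=
      (H.mixed_eq_right hy hxz (by rw [hyxz, hyz]; exact hz.1)).symm.trans (hyxz.trans hyz)
    rw [hyz, hxzz]

theorem distrib_high_low_high_of_eq_high (H : LocallyInternalPair U₁ U₂ e₁ e₂)
    (hx : x ∈ Icc e₂ 1) (hy : y ∈ Ico 0 e₂) (hz : z ∈ Icc e₂ 1) (hyx : U₁ y x = x) :
    U₁ x (U₂ y z) = U₂ (U₁ x y) (U₁ x z) := by
  have hU₁ := H.uninorm₁
  have hx₀ := H.mem_Icc_of_high hx
  have hy₀ := H.mem_Icc_of_low hy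
  have he₁ : e₁ ∈ Icc e₂ 1 := ⟨H.lt.le, hU₁.1.2⟩
  have hv := H.uninorm₂.mapsTo_Icc_neutral he₁ hz
  have hyv : U₂ y (U₂ e₁ z) = U₂ y z := by
    rw [← H.uninorm₂.assoc hy₀ hU₁.1 (H.mem_Icc_of_high hz),
      (H.min_mid y hy e₁ ⟨H.lt.le, le_rfl⟩).2, min_eq_left (hy.2.le.trans H.lt.le)]
  have hrhs : U₂ x (U₁ x z) = U₁ x (U₂ e₁ z) := by
    rw [H.distrib_upper x hx e₁ he₁ z hz, hU₁.neutral_right hx₀]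
  rw [hU₁.comm hx₀ hy₀, hyx, hrhs, H.apply₂_eq_apply₁ hy hz]
  rcases (H.mixed y hy z hz).2 with hyz | hyz
  · have hxv := H.mapsTo₁ x hx _ hv
    have hyxv : U₁ y (U₁ x (U₂ e₁ z)) = x := by
      rw [hU₁.comm hy₀ (H.mem_Icc_of_high hxv), hU₁.assoc hx₀ (H.mem_Icc_of_high hv) hy₀,
        hU₁.comm (H.mem_Icc_of_high hv) hy₀, ← H.apply₂_eq_apply₁ hy hv, hyv,
        H.apply₂_eq_apply₁ hy hz, hyz, hU₁.comm hx₀ hy₀, hyx]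
    rw [hyz, hU₁.comm hx₀ hy₀, hyx]
    exact hyxv.symm.trans (H.mixed_eq_right hy hxv (by rw [hyxv]; exact hx.1))
  · have hyz₂ : U₂ y (U₂ e₁ z) = z := by rw [hyv, H.apply₂_eq_apply₁ hy hz, hyz]
    have hvz : U₂ e₁ z = z := by
      have h := H.mixed_eq_right hy hv (by rw [← H.apply₂_eq_apply₁ hy hv, hyz₂]; exact hz.1)
      rw [← H.apply₂_eq_apply₁ hy hv, hyz₂] at h
      exact h.symm
    rw [hyz, hvz]

theorem distrib_of_le (H : LocallyInternalPair U₁ U₂ e₁ e₂) (hx : x ∈ Icc 0 1)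
    (hy : y ∈ Icc 0 1) (hz : z ∈ Icc 0 1) (hyz : y ≤ z) :
    U₁ x (U₂ y z) = U₂ (U₁ x y) (U₁ x z) := by
  have low : ∀ {a}, a ∈ Icc (0 : ℝ) 1 → a < e₂ → a ∈ Ico 0 e₂ := fun ha h => ⟨ha.1, h⟩
  have high : ∀ {a}, a ∈ Icc (0 : ℝ) 1 → e₂ ≤ a → a ∈ Icc e₂ 1 := fun ha h => ⟨h, ha.2⟩
  rcases lt_or_ge x e₂ with hxe | hxe <;> rcases lt_or_ge z e₂ with hze | hze
  · exact H.distrib_low_low_low (low hx hxe) (low hy (hyz.trans_lt hze)) (low hz hze) hyz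
  · rcases lt_or_ge y e₂ with hye | hye
    · exact H.distrib_low_low_high (low hx hxe) (low hy hye) (high hz hze)
    · exact H.distrib_low_high_high (low hx hxe) (high hy hye) (high hz hze)
  · exact H.distrib_high_low_low (high hx hxe) (low hy (hyz.trans_lt hze)) (low hz hze) hyz
  · rcases lt_or_ge y e₂ with hye | hye
    · rcases (H.mixed y (low hy hye) x (high hx hxe)).2 with hyx | hyx
      · exact H.distrib_high_low_high_of_eq_low (high hx hxe) (low hy hye) (high hz hze) hyx
      · exact H.distrib_high_low_high_of_eq_high (high hx hxe) (low hy hye) (high hz hze) hyx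
    · exact H.distrib_upper x (high hx hxe) y (high hy hye) z (high hz hze)

theorem distributiveOver (H : LocallyInternalPair U₁ U₂ e₁ e₂) : DistributiveOver U₁ U₂ := by
  intro x hx y hy z hz
  rcases le_total y z with hyz | hzy
  · exact H.distrib_of_le hx hy hz hyz
  · rw [H.uninorm₂.comm hy hz, H.uninorm₂.comm (H.uninorm₁.mem_Icc hx hy)
      (H.uninorm₁.mem_Icc hx hz)]
    exact H.distrib_of_le hx hz hy hzy

end LocallyInternalPair

theorem stmt13_general (U₁ U₂ : ℝ → ℝ → ℝ) (e₁ e₂ : ℝ)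
    (h21 : e₂ < e₁)
    (hU₁ : IsUninorm U₁ e₁) (hU₂ : IsUninorm U₂ e₂)
    (hi : ∀ x ∈ Ico (0:ℝ) e₂, ∀ y ∈ Icc e₂ 1,
      U₁ x y = U₂ x y ∧ (U₁ x y = x ∨ U₁ x y = y))
    (hi' : ∀ x₀ ∈ Ico (0:ℝ) e₂, ∀ y₀ ∈ Icc e₁ 1, U₂ x₀ y₀ = y₀ → U₂ y₀ y₀ = y₀)
    (hii : ∀ x ∈ Ico (0:ℝ) e₂, ∀ y ∈ Icc e₂ e₁,
      U₁ x y = min x y ∧ U₂ x y = min x y)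
    (hiii : ∀ x ∈ Icc (0:ℝ) e₂, ∀ y ∈ Icc (0:ℝ) e₂, U₂ x y = min x y)
    (hiv : IsUninorm
      (fun x y => (U₁ (e₂ + (1 - e₂) * x) (e₂ + (1 - e₂) * y) - e₂) / (1 - e₂))
      ((e₁ - e₂) / (1 - e₂)))
    (hiv' : DistributiveOver
      (fun x y => (U₁ (e₂ + (1 - e₂) * x) (e₂ + (1 - e₂) * y) - e₂) / (1 - e₂))
      (fun x y => (U₂ (e₂ + (1 - e₂) * x) (e₂ + (1 - e₂) * y) - e₂) / (1 - e₂))) :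
    DistributiveOver U₁ U₂ := by
  have he₂ : e₂ < 1 := h21.trans_le hU₁.1.2
  exact LocallyInternalPair.distributiveOver
    { lt := h21, uninorm₁ := hU₁, uninorm₂ := hU₂, mixed := hi, idem := hi', min_mid := hii,
      min_low := hiii
      mapsTo₁ := fun _ ha _ hb => mapsTo_Icc_of_upperRescale he₂ hiv.2.1 ha hb
      distrib_upper := distributiveOn_of_upperRescale he₂.ne hiv' }

theorem stmt13 (U₁ U₂ : ℝ → ℝ → ℝ) (e₁ e₂ : ℝ)
    (h0 : 0 < e₂) (h21 : e₂ < e₁) (h1 : e₁ < 1)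
    (hU₁ : IsUninorm U₁ e₁) (hU₂ : IsUninorm U₂ e₂)
    (hi : ∀ x ∈ Ico (0:ℝ) e₂, ∀ y ∈ Icc e₂ 1,
      U₁ x y = U₂ x y ∧ (U₁ x y = x ∨ U₁ x y = y))
    (hi' : ∀ x₀ ∈ Ico (0:ℝ) e₂, ∀ y₀ ∈ Icc e₁ 1, U₂ x₀ y₀ = y₀ → U₂ y₀ y₀ = y₀)
    (hii : ∀ x ∈ Ico (0:ℝ) e₂, ∀ y ∈ Icc e₂ e₁,
      U₁ x y = min x y ∧ U₂ x y = min x y)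
    (hiii : ∀ x ∈ Icc (0:ℝ) e₂, ∀ y ∈ Icc (0:ℝ) e₂, U₂ x y = min x y)
    (hiv : IsUninorm
      (fun x y => (U₁ (e₂ + (1 - e₂) * x) (e₂ + (1 - e₂) * y) - e₂) / (1 - e₂))
      ((e₁ - e₂) / (1 - e₂)))
    (hiv' : DistributiveOver
      (fun x y => (U₁ (e₂ + (1 - e₂) * x) (e₂ + (1 - e₂) * y) - e₂) / (1 - e₂))
      (fun x y => (U₂ (e₂ + (1 - e₂) * x) (e₂ + (1 - e₂) * y) - e₂) / (1 - e₂))) :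
    DistributiveOver U₁ U₂ :=
  stmt13_general U₁ U₂ e₁ e₂ h21 hU₁ hU₂ hi hi' hii hiii hiv hiv'
end

section
/- Let 0 < e₁ < e₂ < 1 and let U₁, U₂ be uninorms on [0,1] with neutral elements e₁, e₂ respectively, such that U₁ is distributive over U₂. Then U₂(x,y) = max(x,y) for all x,y ∈ [e₂,1]. -/
open Set

theorem stmt14 (U₁ U₂ : ℝ → ℝ → ℝ) (e₁ e₂ : ℝ)
    (h0 : 0 < e₁) (h12 : e₁ < e₂) (h1 : e₂ < 1)
    (hU₁ : IsUninorm U₁ e₁) (hU₂ : IsUninorm U₂ e₂)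
    (hd : DistributiveOver U₁ U₂) :
    ∀ x ∈ Icc e₂ (1:ℝ), ∀ y ∈ Icc e₂ (1:ℝ), U₂ x y = max x y := by
  obtain ⟨he₁, hB₁, hC₁, hA₁, hM₁, hN₁⟩ := hU₁
  obtain ⟨he₂, hB₂, hC₂, hA₂, hM₂, hN₂⟩ := hU₂
  -- membership of [e₂,1] in [0,1]
  have hsub : ∀ x ∈ Icc e₂ (1:ℝ), x ∈ Icc (0:ℝ) 1 := by
    rintro x ⟨hx1, hx2⟩
    exact ⟨le_trans he₂.1 hx1, hx2⟩
  -- idempotency on [e₂,1]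
  have hidem : ∀ x ∈ Icc e₂ (1:ℝ), U₂ x x = x := by
    intro x hx
    have hx01 := hsub x hx
    set c := U₂ e₁ e₁ with hc
    have hc01 : c ∈ Icc (0:ℝ) 1 := hB₂ e₁ he₁ e₁ he₁
    have hce₁ : c ≤ e₁ := by
      have h := hM₂ e₁ he₁ e₁ he₁ e₂ he₂ e₁ he₁ (le_of_lt h12) le_rfl
      rwa [hN₂ e₁ he₁] at h
    have hxe₁ : U₁ x e₁ = x := by rw [hC₁ x hx01 e₁ he₁, hN₁ x hx01]
    have hkey : U₂ x x = U₁ x c := by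
      have h := hd x hx01 e₁ he₁ e₁ he₁
      rw [hxe₁] at h
      exact h.symm
    have hle : U₂ x x ≤ x := by
      rw [hkey]
      calc U₁ x c ≤ U₁ x e₁ := hM₁ x hx01 c hc01 x hx01 e₁ he₁ le_rfl hce₁
        _ = x := hxe₁
    have hge : x ≤ U₂ x x := by
      have h := hM₂ e₂ he₂ x hx01 x hx01 x hx01 hx.1 le_rfl
      rwa [hN₂ x hx01] at h
    linarith
  -- main statement
  intro x hx y hy
  have hx01 := hsub x hx
  have hy01 := hsub y hy
  rcases le_total x y with h | h
  · rw [max_eq_right h]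
    have h1' : y ≤ U₂ x y := by
      have := hM₂ e₂ he₂ y hy01 x hx01 y hy01 hx.1 le_rfl
      rwa [hN₂ y hy01] at this
    have h2' : U₂ x y ≤ y := by
      have := hM₂ x hx01 y hy01 y hy01 y hy01 h le_rfl
      rwa [hidem y hy] at this
    linarith
  · rw [max_eq_left h]
    have h1' : x ≤ U₂ x y := by
      have := hM₂ x hx01 e₂ he₂ x hx01 y hy01 le_rfl hy.1
      rwa [hC₂ x hx01 e₂ he₂, hN₂ x hx01] at this
    have h2' : U₂ x y ≤ x := by
      have := hM₂ x hx01 y hy01 x hx01 x hx01 le_rfl h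
      rwa [hidem x hx] at this
    linarith
end

section
/- Let 0 < e₁ < e₂ < 1 and let U₁, U₂ be uninorms on [0,1] with neutral elements e₁, e₂ respectively, such that U₁ is distributive over U₂. Then U₁(x,y) = max(x,y) for all x ∈ [e₂,1] and y ∈ [e₁,e₂]. -/
open Set

theorem stmt15 (U₁ U₂ : ℝ → ℝ → ℝ) (e₁ e₂ : ℝ)
    (h0 : 0 < e₁) (h12 : e₁ < e₂) (h1 : e₂ < 1)
    (hU₁ : IsUninorm U₁ e₁) (hU₂ : IsUninorm U₂ e₂)
    (hd : DistributiveOver U₁ U₂) :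
    ∀ x ∈ Icc e₂ (1:ℝ), ∀ y ∈ Icc e₁ e₂, U₁ x y = max x y := by
  obtain ⟨he₁, hcl₁, hcomm₁, -, hmono₁, hneut₁⟩ := hU₁
  obtain ⟨he₂, hcl₂, hcomm₂, -, hmono₂, hneut₂⟩ := hU₂
  rintro x ⟨hx₂, hx1⟩ y ⟨hy₁, hy₂⟩
  have hxI : x ∈ Icc (0:ℝ) 1 := ⟨le_trans he₂.1 hx₂, hx1⟩
  have hyI : y ∈ Icc (0:ℝ) 1 := ⟨le_trans he₁.1 hy₁, le_trans hy₂ he₂.2⟩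
  have hxe : U₁ x e₁ = x := by rw [hcomm₁ x hxI e₁ he₁, hneut₁ x hxI]
  set a := U₁ x e₂ with ha
  have haI : a ∈ Icc (0:ℝ) 1 := hcl₁ x hxI e₂ he₂
  -- a ≥ x
  have hax : x ≤ a := by
    have := hmono₁ x hxI e₁ he₁ x hxI e₂ he₂ le_rfl h12.le
    rwa [hxe] at this
  -- x = U₂ a x
  have hkey : x = U₂ a x := by
    have := hd x hxI e₂ he₂ e₁ he₁
    rw [hneut₂ e₁ he₁, hxe] at this
    exact this
  -- U₂ a x ≥ a
  have hax' : a ≤ U₂ a x := by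
    have h2 : U₂ a e₂ = a := by rw [hcomm₂ a haI e₂ he₂, hneut₂ a haI]
    have := hmono₂ a haI e₂ he₂ a haI x hxI le_rfl hx₂
    rwa [h2] at this
  have hae : a = x := le_antisymm (hkey ▸ hax') hax
  have h1 : x ≤ U₁ x y := by
    have := hmono₁ x hxI e₁ he₁ x hxI y hyI le_rfl hy₁
    rwa [hxe] at this
  have h2 : U₁ x y ≤ x := by
    have := hmono₁ x hxI y hyI x hxI e₂ he₂ le_rfl hy₂
    rwa [← ha, hae] at this
  rw [le_antisymm h2 h1, max_eq_left (hy₂.trans hx₂)]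
end

section
/- Let 0 < e₁ < e₂ < 1 and let U₁, U₂ be uninorms on [0,1] with neutral elements e₁, e₂ respectively, such that U₁ is distributive over U₂. Then U₂(x,y) = max(x,y) for all x ∈ (e₂,1] and y ∈ [e₁,e₂]. -/
open Set

theorem stmt16 (U₁ U₂ : ℝ → ℝ → ℝ) (e₁ e₂ : ℝ)
    (h0 : 0 < e₁) (h12 : e₁ < e₂) (h1 : e₂ < 1)
    (hU₁ : IsUninorm U₁ e₁) (hU₂ : IsUninorm U₂ e₂)
    (hd : DistributiveOver U₁ U₂) :
    ∀ x ∈ Ioc e₂ (1:ℝ), ∀ y ∈ Icc e₁ e₂, U₂ x y = max x y := by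
  obtain ⟨he₁, hcl₁, hcomm₁, hassoc₁, hmono₁, hneut₁⟩ := hU₁
  obtain ⟨he₂, hcl₂, hcomm₂, hassoc₂, hmono₂, hneut₂⟩ := hU₂
  -- Lemma A: U₁ z e₂ = z for z ≥ e₂
  have lemA : ∀ z ∈ Icc (0:ℝ) 1, e₂ ≤ z → U₁ z e₂ = z := by
    intro z hz hez
    have hc : U₁ z e₂ ∈ Icc (0:ℝ) 1 := hcl₁ z hz e₂ he₂
    have hkey : U₁ z (U₂ e₁ e₂) = U₂ (U₁ z e₁) (U₁ z e₂) := hd z hz e₁ he₁ e₂ he₂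
    have h12' : U₂ e₁ e₂ = e₁ := by rw [hcomm₂ e₁ he₁ e₂ he₂, hneut₂ e₁ he₁]
    have hze₁ : U₁ z e₁ = z := by rw [hcomm₁ z hz e₁ he₁, hneut₁ z hz]
    rw [h12', hze₁] at hkey
    -- hkey : z = U₂ z (U₁ z e₂)
    have hge : z ≤ U₁ z e₂ := by
      have := hmono₁ z hz e₁ he₁ z hz e₂ he₂ le_rfl h12.le
      rwa [hze₁] at this
    have hle : U₁ z e₂ ≤ z := by
      have h2 : U₂ e₂ (U₁ z e₂) ≤ U₂ z (U₁ z e₂) :=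
        hmono₂ e₂ he₂ _ hc z hz _ hc hez le_rfl
      rw [hneut₂ _ hc] at h2
      linarith [hkey ▸ h2]
    linarith
  intro x hx y hy
  have hxI : x ∈ Icc (0:ℝ) 1 := ⟨by linarith [hx.1, he₂.1], hx.2⟩
  have hyI : y ∈ Icc (0:ℝ) 1 := ⟨by linarith [hy.1], by linarith [hy.2]⟩
  have hxe : U₁ e₂ x = x := by
    rw [hcomm₁ e₂ he₂ x hxI]; exact lemA x hxI hx.1.le
  -- key: U₁ e₂ (U₂ x e₁) = x
  have hs : U₂ x e₁ ∈ Icc (0:ℝ) 1 := hcl₂ x hxI e₁ he₁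
  have hkey : U₁ e₂ (U₂ x e₁) = U₂ (U₁ e₂ x) (U₁ e₂ e₁) := hd e₂ he₂ x hxI e₁ he₁
  have h21 : U₁ e₂ e₁ = e₂ := by rw [hcomm₁ e₂ he₂ e₁ he₁, hneut₁ e₂ he₂]
  have hxe₂ : U₂ x e₂ = x := by rw [hcomm₂ x hxI e₂ he₂, hneut₂ x hxI]
  rw [hxe, h21, hxe₂] at hkey
  -- now show U₂ x e₁ = x
  have hsx : U₂ x e₁ = x := by
    rcases le_or_gt (U₂ x e₁) e₂ with h | h
    · exfalso
      have hee : U₁ e₂ e₂ = e₂ := lemA e₂ he₂ le_rfl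
      have := hmono₁ e₂ he₂ _ hs e₂ he₂ e₂ he₂ le_rfl h
      rw [hee, hkey] at this
      linarith [hx.1]
    · have : U₁ e₂ (U₂ x e₁) = U₂ x e₁ := by
        rw [hcomm₁ e₂ he₂ _ hs]; exact lemA _ hs h.le
      linarith [hkey ▸ this]
  have hlow : x ≤ U₂ x y := by
    have := hmono₂ x hxI e₁ he₁ x hxI y hyI le_rfl hy.1
    rwa [hsx] at this
  have hhigh : U₂ x y ≤ x := by
    have := hmono₂ x hxI y hyI x hxI e₂ he₂ le_rfl hy.2
    rwa [hxe₂] at this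
  have : U₂ x y = x := le_antisymm hhigh hlow
  rw [this, max_eq_left (by linarith [hy.2, hx.1])]
end

section
/- Let 0 < e₁ < e₂ < 1 and let U₁, U₂ be uninorms on [0,1] with neutral elements e₁, e₂ respectively, such that U₁ is distributive over U₂. Then for all x ∈ (e₂,1] and y ∈ [0,e₁], U₁(x,y) = U₂(x,y) ∈ {x,y}, and if U₂(x₀,y₀) = y₀ for some x₀ ∈ (e₂,1], y₀ ∈ [0,e₁], then U₂(y₀,y₀) = y₀. -/
open Set

theorem stmt17 (U₁ U₂ : ℝ → ℝ → ℝ) (e₁ e₂ : ℝ)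
    (h0 : 0 < e₁) (h12 : e₁ < e₂) (h1 : e₂ < 1)
    (hU₁ : IsUninorm U₁ e₁) (hU₂ : IsUninorm U₂ e₂)
    (hd : DistributiveOver U₁ U₂) :
    (∀ x ∈ Ioc e₂ (1:ℝ), ∀ y ∈ Icc (0:ℝ) e₁,
      U₁ x y = U₂ x y ∧ (U₁ x y = x ∨ U₁ x y = y)) ∧
    (∀ x₀ ∈ Ioc e₂ (1:ℝ), ∀ y₀ ∈ Icc (0:ℝ) e₁, U₂ x₀ y₀ = y₀ → U₂ y₀ y₀ = y₀) := by
  obtain ⟨he₁S, hcl₁, hcm₁, has₁, hmo₁, hne₁⟩ := hU₁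
  obtain ⟨he₂S, hcl₂, hcm₂, has₂, hmo₂, hne₂⟩ := hU₂
  have hne₁' : ∀ x ∈ Icc (0:ℝ) 1, U₁ x e₁ = x := fun x hx => by
    rw [hcm₁ x hx e₁ he₁S]; exact hne₁ x hx
  have hne₂' : ∀ x ∈ Icc (0:ℝ) 1, U₂ x e₂ = x := fun x hx => by
    rw [hcm₂ x hx e₂ he₂S]; exact hne₂ x hx
  -- Step 1 : U₁ x e₂ = x for x > e₂
  have step1 : ∀ x, e₂ < x → x ≤ 1 → U₁ x e₂ = x := by
    intro x hx1 hx2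
    have hxS : x ∈ Icc (0:ℝ) 1 := ⟨by linarith [he₂S.1], hx2⟩
    have haS : U₁ x e₂ ∈ Icc (0:ℝ) 1 := hcl₁ x hxS e₂ he₂S
    have hax : x ≤ U₁ x e₂ := by
      have h := hmo₁ x hxS e₁ he₁S x hxS e₂ he₂S le_rfl h12.le
      rwa [hne₁' x hxS] at h
    have hd1 := hd x hxS e₂ he₂S e₁ he₁S
    rw [hne₂ e₁ he₁S, hne₁' x hxS] at hd1
    -- hd1 : x = U₂ (U₁ x e₂) x
    have hle : U₂ (U₁ x e₂) e₂ ≤ U₂ (U₁ x e₂) x :=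
      hmo₂ _ haS e₂ he₂S _ haS x hxS le_rfl hx1.le
    rw [hne₂' _ haS] at hle
    linarith
  -- U₁ e₂ e₂ = e₂
  have hE2 : U₁ e₂ e₂ = e₂ := by
    have hES : U₁ e₂ e₂ ∈ Icc (0:ℝ) 1 := hcl₁ e₂ he₂S e₂ he₂S
    have hge : e₂ ≤ U₁ e₂ e₂ := by
      have h := hmo₁ e₁ he₁S e₂ he₂S e₂ he₂S e₂ he₂S h12.le le_rfl
      rwa [hne₁ e₂ he₂S] at h
    have hle : U₁ e₂ e₂ ≤ e₂ := by
      by_contra hcon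
      push_neg at hcon
      have hx'1 : e₂ < (e₂ + U₁ e₂ e₂) / 2 := by linarith
      have hx'2 : (e₂ + U₁ e₂ e₂) / 2 ≤ 1 := by linarith [hES.2]
      have h := step1 _ hx'1 hx'2
      have hmon : U₁ e₂ e₂ ≤ U₁ ((e₂ + U₁ e₂ e₂) / 2) e₂ :=
        hmo₁ e₂ he₂S e₂ he₂S _ ⟨by linarith [he₂S.1], hx'2⟩ e₂ he₂S hx'1.le le_rfl
      rw [h] at hmon
      linarith
    linarith
  -- Step 2 : U₂ x x = x for x > e₂
  have step2 : ∀ x, e₂ < x → x ≤ 1 → U₂ x x = x := by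
    intro x hx1 hx2
    have hxS : x ∈ Icc (0:ℝ) 1 := ⟨by linarith [he₂S.1], hx2⟩
    have hpS : U₂ e₁ e₁ ∈ Icc (0:ℝ) 1 := hcl₂ e₁ he₁S e₁ he₁S
    have hp_le : U₂ e₁ e₁ ≤ e₁ := by
      have h := hmo₂ e₁ he₁S e₁ he₁S e₁ he₁S e₂ he₂S le_rfl h12.le
      rwa [hne₂' e₁ he₁S] at h
    have hd2 := hd x hxS e₁ he₁S e₁ he₁S
    rw [hne₁' x hxS] at hd2
    -- hd2 : U₁ x (U₂ e₁ e₁) = U₂ x x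
    have hle : U₁ x (U₂ e₁ e₁) ≤ x := by
      have h := hmo₁ x hxS (U₂ e₁ e₁) hpS x hxS e₁ he₁S le_rfl hp_le
      rwa [hne₁' x hxS] at h
    have hge : x ≤ U₂ x x := by
      have h := hmo₂ x hxS e₂ he₂S x hxS x hxS le_rfl hx1.le
      rwa [hne₂' x hxS] at h
    linarith
  -- Step 3 : U₂ x e₁ = x for x > e₂
  have step3 : ∀ x, e₂ < x → x ≤ 1 → U₂ x e₁ = x := by
    intro x hx1 hx2
    have hxS : x ∈ Icc (0:ℝ) 1 := ⟨by linarith [he₂S.1], hx2⟩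
    have hsS : U₂ x e₁ ∈ Icc (0:ℝ) 1 := hcl₂ x hxS e₁ he₁S
    have hsx : U₂ x e₁ ≤ x := by
      have h := hmo₂ x hxS e₁ he₁S x hxS e₂ he₂S le_rfl h12.le
      rwa [hne₂' x hxS] at h
    have h3a : U₂ x (U₂ x e₁) = U₂ x e₁ := by
      have h := has₂ x hxS x hxS e₁ he₁S
      rw [step2 x hx1 hx2] at h
      exact h.symm
    have h3b : e₂ < U₂ x e₁ := by
      by_contra hcon
      push_neg at hcon
      have hd3 := hd e₂ he₂S x hxS e₁ he₁S
      rw [hcm₁ e₂ he₂S x hxS, step1 x hx1 hx2, hcm₁ e₂ he₂S e₁ he₁S,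
        hne₁ e₂ he₂S, hne₂' x hxS] at hd3
      -- hd3 : U₁ e₂ (U₂ x e₁) = x
      have hb : U₁ e₂ (U₂ x e₁) ≤ U₁ e₂ e₂ :=
        hmo₁ e₂ he₂S _ hsS e₂ he₂S e₂ he₂S le_rfl hcon
      rw [hE2] at hb
      linarith
    have h3c : x ≤ U₂ x (U₂ x e₁) := by
      have h := hmo₂ x hxS e₂ he₂S x hxS _ hsS le_rfl h3b.le
      rwa [hne₂' x hxS] at h
    rw [h3a] at h3c
    linarith
  -- Key lemma
  have key : ∀ x, e₂ < x → x ≤ 1 → ∀ y, 0 ≤ y → y ≤ e₁ →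
      U₁ x y = U₂ x y ∧ (U₁ x y = x ∨ U₁ x y = y) ∧
      U₂ (U₁ x y) (U₁ x y) = U₁ x y := by
    intro x hx1 hx2 y hy1 hy2
    have hxS : x ∈ Icc (0:ℝ) 1 := ⟨by linarith [he₂S.1], hx2⟩
    have hyS : y ∈ Icc (0:ℝ) 1 := ⟨hy1, by linarith [he₁S.2]⟩
    have hcS : U₁ x y ∈ Icc (0:ℝ) 1 := hcl₁ x hxS y hyS
    have hyc : y ≤ U₁ x y := by
      have h := hmo₁ e₁ he₁S y hyS x hxS y hyS (by linarith) le_rfl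
      rwa [hne₁ y hyS] at h
    have hcx : U₁ x y ≤ x := by
      have h := hmo₁ x hxS y hyS x hxS e₁ he₁S le_rfl hy2
      rwa [hne₁' x hxS] at h
    -- U₂ (U₁ x y) x = U₁ x y
    have h4a : U₂ (U₁ x y) x = U₁ x y := by
      have h := hd x hxS y hyS e₂ he₂S
      rw [hne₂' y hyS, step1 x hx1 hx2] at h
      exact h.symm
    -- U₂ (U₁ x y) y = U₁ x y
    have h4b : U₂ (U₁ x y) y = U₁ x y := by
      have h := hd y hyS x hxS e₁ he₁S
      rw [step3 x hx1 hx2, hcm₁ y hyS x hxS, hne₁' y hyS] at h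
      exact h.symm
    -- U₂ x y = U₁ x y
    have h4c : U₁ x y = U₂ x y := by
      have hup : U₂ x y ≤ U₂ x (U₁ x y) :=
        hmo₂ x hxS y hyS x hxS _ hcS le_rfl hyc
      rw [hcm₂ x hxS _ hcS, h4a] at hup
      have hlo : U₂ (U₁ x y) y ≤ U₂ x y :=
        hmo₂ _ hcS y hyS x hxS y hyS hcx le_rfl
      rw [h4b] at hlo
      linarith
    -- idempotency of U₁ x y
    have hid : U₂ (U₁ x y) (U₁ x y) = U₁ x y := by
      have h := hd y hyS x hxS x hxS
      rw [step2 x hx1 hx2, hcm₁ y hyS x hxS] at h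
      exact h.symm
    refine ⟨h4c, ?_, hid⟩
    by_cases hce : U₁ x y ≤ e₂
    · right
      have h := hmo₂ _ hcS y hyS e₂ he₂S y hyS hce le_rfl
      rw [h4b, hne₂ y hyS] at h
      linarith
    · left
      push_neg at hce
      have h := hmo₂ e₂ he₂S x hxS _ hcS x hxS hce.le le_rfl
      rw [h4a, hne₂ x hxS] at h
      linarith
  constructor
  · intro x hx y hy
    obtain ⟨h1', h2', _⟩ := key x hx.1 hx.2 y hy.1 hy.2
    exact ⟨h1', h2'⟩
  · intro x₀ hx₀ y₀ hy₀ hyp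
    obtain ⟨h1', _, h3'⟩ := key x₀ hx₀.1 hx₀.2 y₀ hy₀.1 hy₀.2
    have hc : U₁ x₀ y₀ = y₀ := h1'.trans hyp
    rw [hc] at h3'
    exact h3'
end

section
/- Let 0 < e₁ < e₂ < 1 and let U₁, U₂ be uninorms on [0,1] with neutral elements e₁, e₂ respectively, such that U₁ is distributive over U₂. Define Û(x,y) = U₁(e₂x, e₂y)/e₂ for x,y ∈ [0,1]. Then Û is a uninorm with neutral element e₁/e₂, and Û is distributive over the operation T(x,y) = U₂(e₂x, e₂y)/e₂. -/
open Set

theorem stmt18 (U₁ U₂ : ℝ → ℝ → ℝ) (e₁ e₂ : ℝ)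
    (h0 : 0 < e₁) (h12 : e₁ < e₂) (h1 : e₂ < 1)
    (hU₁ : IsUninorm U₁ e₁) (hU₂ : IsUninorm U₂ e₂)
    (hd : DistributiveOver U₁ U₂) :
    IsUninorm (fun x y => U₁ (e₂ * x) (e₂ * y) / e₂) (e₁ / e₂) ∧
    DistributiveOver (fun x y => U₁ (e₂ * x) (e₂ * y) / e₂)
      (fun x y => U₂ (e₂ * x) (e₂ * y) / e₂) := by
  obtain ⟨he₁, hb₁, hc₁, ha₁, hm₁, hn₁⟩ := hU₁
  obtain ⟨he₂, hb₂, hc₂, ha₂, hm₂, hn₂⟩ := hU₂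
  have he₂pos : (0:ℝ) < e₂ := lt_trans h0 h12
  have he₂ne : e₂ ≠ 0 := ne_of_gt he₂pos
  have hsc : ∀ x ∈ Icc (0:ℝ) 1, e₂ * x ∈ Icc (0:ℝ) 1 := by
    intro x hx
    constructor
    · exact mul_nonneg he₂pos.le hx.1
    · calc e₂ * x ≤ e₂ * 1 := by nlinarith [hx.2]
        _ ≤ 1 := by linarith
  -- Key fact: U₁ e₂ e₂ = e₂
  have hkey : U₁ e₂ e₂ = e₂ := by
    have h := hd e₂ he₂ e₂ he₂ e₁ he₁
    rw [hn₂ e₁ he₁] at h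
    have hx : U₁ e₂ e₁ = e₂ := by
      rw [hc₁ e₂ he₂ e₁ he₁, hn₁ e₂ he₂]
    rw [hx] at h
    have := hb₁ e₂ he₂ e₂ he₂
    rw [hc₂ (U₁ e₂ e₂) this e₂ he₂, hn₂ (U₁ e₂ e₂) this] at h
    linarith
  -- Boundedness: U₁ a b ≤ e₂ for a,b ∈ [0, e₂]
  have hbd : ∀ x ∈ Icc (0:ℝ) 1, ∀ y ∈ Icc (0:ℝ) 1,
      U₁ (e₂ * x) (e₂ * y) ∈ Icc (0:ℝ) e₂ := by
    intro x hx y hy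
    refine ⟨(hb₁ _ (hsc x hx) _ (hsc y hy)).1, ?_⟩
    have := hm₁ _ (hsc x hx) _ (hsc y hy) e₂ ⟨he₂pos.le, h1.le⟩ e₂ ⟨he₂pos.le, h1.le⟩
      (by nlinarith [hx.2]) (by nlinarith [hy.2])
    rw [hkey] at this; exact this
  have hmem : ∀ x ∈ Icc (0:ℝ) 1, ∀ y ∈ Icc (0:ℝ) 1,
      U₁ (e₂ * x) (e₂ * y) / e₂ ∈ Icc (0:ℝ) 1 := by
    intro x hx y hy
    obtain ⟨hl, hr⟩ := hbd x hx y hy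
    exact ⟨div_nonneg hl he₂pos.le, (div_le_one he₂pos).2 hr⟩
  refine ⟨⟨?_, hmem, ?_, ?_, ?_, ?_⟩, ?_⟩
  · exact ⟨div_nonneg h0.le he₂pos.le, (div_le_one he₂pos).2 (by linarith)⟩
  · intro x hx y hy
    simp only [hc₁ _ (hsc x hx) _ (hsc y hy)]
  · intro x hx y hy z hz
    simp only
    rw [mul_div_cancel₀ _ he₂ne, mul_div_cancel₀ _ he₂ne]
    rw [ha₁ _ (hsc x hx) _ (hsc y hy) _ (hsc z hz)]
  · intro x hx y hy x' hx' y' hy' hxx hyy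
    simp only
    apply div_le_div_of_nonneg_right ?_ he₂pos.le
    exact hm₁ _ (hsc x hx) _ (hsc y hy) _ (hsc x' hx') _ (hsc y' hy')
      (by nlinarith) (by nlinarith)
  · intro x hx
    simp only
    rw [mul_div_cancel₀ _ he₂ne, hn₁ _ (hsc x hx), mul_div_cancel_left₀ _ he₂ne]
  · intro x hx y hy z hz
    simp only
    rw [mul_div_cancel₀ _ he₂ne, mul_div_cancel₀ _ he₂ne, mul_div_cancel₀ _ he₂ne]
    rw [hd _ (hsc x hx) _ (hsc y hy) _ (hsc z hz)]
end

section
/- Let U₁ and U₂ be uninorms on [0,1] with neutral elements e₁, e₂ ∈ (0,1) (not necessarily equal), such that U₁ is distributive over U₂. Then U₂ is locally internal on A(e₂): U₂(x,y) ∈ {x,y} for all (x,y) ∈ [0,1]² \ ([0,e₂]² ∪ [e₂,1]²). -/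
open Set

lemma aux19 (F G : ℝ → ℝ → ℝ) (e₁ e₂ : ℝ)
    (hU₁ : IsUninorm F e₁) (hU₂ : IsUninorm G e₂)
    (hd : DistributiveOver F G)
    (x y : ℝ) (hx : x ∈ Icc (0:ℝ) 1) (hy : y ∈ Icc (0:ℝ) 1)
    (hxe : x ≤ e₂) (hey : e₂ ≤ y) :
    G x y = x ∨ G x y = y := by
  obtain ⟨he₁I, hFcl, hFcomm, hFassoc, hFmono, hFunit⟩ := hU₁
  obtain ⟨he₂I, hGcl, hGcomm, hGassoc, hGmono, hGunit⟩ := hU₂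
  have hFe₁ : ∀ a ∈ Icc (0:ℝ) 1, F a e₁ = a := fun a ha => by
    rw [hFcomm a ha e₁ he₁I, hFunit a ha]
  have hGe₂r : ∀ a ∈ Icc (0:ℝ) 1, G a e₂ = a := fun a ha => by
    rw [hGcomm a ha e₂ he₂I, hGunit a ha]
  have htI : G x y ∈ Icc (0:ℝ) 1 := hGcl x hx y hy
  -- x ≤ G x y ≤ y
  have hxt : x ≤ G x y := by
    have := hGmono x hx e₂ he₂I x hx y hy le_rfl hey
    rwa [hGe₂r x hx] at this
  have hty : G x y ≤ y := by
    have := hGmono x hx y hy e₂ he₂I y hy hxe le_rfl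
    rwa [hGunit y hy] at this
  -- L1 : companion identity  G a (F e₂ a) = a
  have hL1 : ∀ a ∈ Icc (0:ℝ) 1, G a (F e₂ a) = a := by
    intro a ha
    have h := hd a ha e₁ he₁I e₂ he₂I
    rw [hGcomm e₁ he₁I e₂ he₂I, hGunit e₁ he₁I, hFe₁ a ha] at h
    rw [← hFcomm a ha e₂ he₂I, ← h]
  -- L3 : e₂ is F-idempotent
  have hL3 : F e₂ e₂ = e₂ := by
    have h := hL1 e₂ he₂I
    rwa [hGunit (F e₂ e₂) (hFcl e₂ he₂I e₂ he₂I)] at h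
  -- L2 : companions are G-idempotent
  have hL2 : ∀ a ∈ Icc (0:ℝ) 1, G (F e₂ a) (F e₂ a) = F e₂ a := by
    intro a ha
    have h := hd a ha e₂ he₂I e₂ he₂I
    rw [hGunit e₂ he₂I] at h
    rw [hFcomm a ha e₂ he₂I] at h
    exact h.symm
  -- L5 : c(G x y) = G (c x) (c y)
  have hL5 : F e₂ (G x y) = G (F e₂ x) (F e₂ y) := hd e₂ he₂I x hx y hy
  -- G a a = F a (G e₁ e₁)
  have hkI : G e₁ e₁ ∈ Icc (0:ℝ) 1 := hGcl e₁ he₁I e₁ he₁I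
  have hGaa : ∀ a ∈ Icc (0:ℝ) 1, G a a = F a (G e₁ e₁) := by
    intro a ha
    have h := hd a ha e₁ he₁I e₁ he₁I
    rw [hFe₁ a ha] at h
    exact h.symm
  have hdI : F e₂ x ∈ Icc (0:ℝ) 1 := hFcl e₂ he₂I x hx
  have hDI : F e₂ y ∈ Icc (0:ℝ) 1 := hFcl e₂ he₂I y hy
  rcases le_total (G x y) e₂ with hte | het
  · -- t ≤ e₂ : show G x y = x
    left
    rcases le_total e₁ e₂ with h12 | h21
    · -- companion argument
      have hyD : y ≤ F e₂ y := by
        have := hFmono e₁ he₁I y hy e₂ he₂I y hy h12 le_rfl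
        rwa [hFunit y hy] at this
      have hGxd : G x (F e₂ x) = x := hL1 x hx
      have hGdd : G (F e₂ x) (F e₂ x) = F e₂ x := hL2 x hx
      have hme : F e₂ (G x y) ≤ e₂ := by
        have := hFmono e₂ he₂I (G x y) htI e₂ he₂I e₂ he₂I le_rfl hte
        rwa [hL3] at this
      have he₂D : e₂ ≤ F e₂ y := by
        have := hFmono e₂ he₂I e₂ he₂I e₂ he₂I y hy le_rfl hey
        rwa [hL3] at this
      have hmI : G (F e₂ x) (F e₂ y) ∈ Icc (0:ℝ) 1 := hGcl _ hdI _ hDI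
      -- m := G d D satisfies G d m = m
      have hdm : G (F e₂ x) (G (F e₂ x) (F e₂ y)) = G (F e₂ x) (F e₂ y) := by
        rw [← hGassoc _ hdI _ hdI _ hDI, hGdd]
      -- m ≤ d
      have hmd : G (F e₂ x) (F e₂ y) ≤ F e₂ x := by
        have h2 : G (F e₂ x) (G (F e₂ x) (F e₂ y)) ≤ G (F e₂ x) e₂ := by
          apply hGmono _ hdI _ hmI _ hdI e₂ he₂I le_rfl
          rw [← hL5]; exact hme
        rw [hdm, hGe₂r _ hdI] at h2
        exact h2
      -- d ≤ m
      have hdm2 : F e₂ x ≤ G (F e₂ x) (F e₂ y) := by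
        have := hGmono (F e₂ x) hdI e₂ he₂I (F e₂ x) hdI (F e₂ y) hDI le_rfl he₂D
        rwa [hGe₂r _ hdI] at this
      have hmeq : G (F e₂ x) (F e₂ y) = F e₂ x := le_antisymm hmd hdm2
      -- G x D = x
      have hGxD : G x (F e₂ y) = x := by
        calc G x (F e₂ y) = G (G x (F e₂ x)) (F e₂ y) := by rw [hGxd]
          _ = G x (G (F e₂ x) (F e₂ y)) := hGassoc x hx _ hdI _ hDI
          _ = G x (F e₂ x) := by rw [hmeq]
          _ = x := hGxd
      have : G x y ≤ x := by
        have := hGmono x hx y hy x hx (F e₂ y) hDI le_rfl hyD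
        rwa [hGxD] at this
      exact le_antisymm this hxt
    · -- e₂ ≤ e₁ : x is idempotent
      have hk : e₁ ≤ G e₁ e₁ := by
        have := hGmono e₂ he₂I e₁ he₁I e₁ he₁I e₁ he₁I h21 le_rfl
        rwa [hGunit e₁ he₁I] at this
      have hgx : G x x = x := by
        apply le_antisymm
        · have := hGmono x hx x hx x hx e₂ he₂I le_rfl hxe
          rwa [hGe₂r x hx] at this
        · rw [hGaa x hx]
          have := hFmono x hx e₁ he₁I x hx (G e₁ e₁) hkI le_rfl hk
          rwa [hFe₁ x hx] at this
      have hxt2 : G x (G x y) = G x y := by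
        rw [← hGassoc x hx x hx y hy, hgx]
      have : G x y ≤ x := by
        have h2 := hGmono x hx (G x y) htI x hx e₂ he₂I le_rfl hte
        rwa [hxt2, hGe₂r x hx] at h2
      exact le_antisymm this hxt
  · -- e₂ ≤ t : show G x y = y
    right
    rcases le_total e₁ e₂ with h12 | h21
    · -- y is idempotent
      have hk : G e₁ e₁ ≤ e₁ := by
        have := hGmono e₁ he₁I e₁ he₁I e₂ he₂I e₁ he₁I h12 le_rfl
        rwa [hGunit e₁ he₁I] at this
      have hgy : G y y = y := by
        apply le_antisymm
        · rw [hGaa y hy]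
          have := hFmono y hy (G e₁ e₁) hkI y hy e₁ he₁I le_rfl hk
          rwa [hFe₁ y hy] at this
        · have := hGmono e₂ he₂I y hy y hy y hy hey le_rfl
          rwa [hGunit y hy] at this
      have hty2 : G (G x y) y = G x y := by
        rw [hGassoc x hx y hy y hy, hgy]
      have : y ≤ G x y := by
        have h2 := hGmono e₂ he₂I y hy (G x y) htI y hy het le_rfl
        rwa [hty2, hGunit y hy] at h2
      exact le_antisymm hty this
    · -- e₂ ≤ e₁ : companion argument (mirror)
      have hdx : F e₂ x ≤ x := by
        have := hFmono e₂ he₂I x hx e₁ he₁I x hx h21 le_rfl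
        rwa [hFunit x hx] at this
      have hGyD : G y (F e₂ y) = y := hL1 y hy
      have hGDD : G (F e₂ y) (F e₂ y) = F e₂ y := hL2 y hy
      have hem : e₂ ≤ F e₂ (G x y) := by
        have := hFmono e₂ he₂I e₂ he₂I e₂ he₂I (G x y) htI le_rfl het
        rwa [hL3] at this
      have hde₂ : F e₂ x ≤ e₂ := by
        have := hFmono e₂ he₂I x hx e₂ he₂I e₂ he₂I le_rfl hxe
        rwa [hL3] at this
      have hmI : G (F e₂ x) (F e₂ y) ∈ Icc (0:ℝ) 1 := hGcl _ hdI _ hDI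
      -- m := G d D satisfies G m D = m
      have hmDfix : G (G (F e₂ x) (F e₂ y)) (F e₂ y) = G (F e₂ x) (F e₂ y) := by
        rw [hGassoc _ hdI _ hDI _ hDI, hGDD]
      -- D ≤ m
      have hDm : F e₂ y ≤ G (F e₂ x) (F e₂ y) := by
        have h2 : G e₂ (F e₂ y) ≤ G (G (F e₂ x) (F e₂ y)) (F e₂ y) := by
          apply hGmono e₂ he₂I _ hDI _ hmI _ hDI _ le_rfl
          rw [← hL5]; exact hem
        rwa [hmDfix, hGunit _ hDI] at h2
      -- m ≤ D
      have hmD2 : G (F e₂ x) (F e₂ y) ≤ F e₂ y := by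
        have := hGmono (F e₂ x) hdI (F e₂ y) hDI e₂ he₂I (F e₂ y) hDI hde₂ le_rfl
        rwa [hGunit _ hDI] at this
      have hmeq : G (F e₂ x) (F e₂ y) = F e₂ y := le_antisymm hmD2 hDm
      -- G y d = y
      have hGyd : G y (F e₂ x) = y := by
        calc G y (F e₂ x) = G (G y (F e₂ y)) (F e₂ x) := by rw [hGyD]
          _ = G y (G (F e₂ y) (F e₂ x)) := hGassoc y hy _ hDI _ hdI
          _ = G y (G (F e₂ x) (F e₂ y)) := by rw [hGcomm _ hDI _ hdI]
          _ = G y (F e₂ y) := by rw [hmeq]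
          _ = y := hGyD
      have : y ≤ G x y := by
        have h2 := hGmono (F e₂ x) hdI y hy x hx y hy hdx le_rfl
        rw [hGcomm _ hdI y hy, hGyd] at h2
        exact h2
      exact le_antisymm hty this

theorem stmt19 (U₁ U₂ : ℝ → ℝ → ℝ) (e₁ e₂ : ℝ)
    (he₁ : e₁ ∈ Ioo (0:ℝ) 1) (he₂ : e₂ ∈ Ioo (0:ℝ) 1)
    (hU₁ : IsUninorm U₁ e₁) (hU₂ : IsUninorm U₂ e₂)
    (hd : DistributiveOver U₁ U₂)
    (x y : ℝ)
    (h : (x, y) ∈ (Icc (0:ℝ) 1 ×ˢ Icc (0:ℝ) 1) \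
      (Icc (0:ℝ) e₂ ×ˢ Icc (0:ℝ) e₂ ∪ Icc e₂ 1 ×ˢ Icc e₂ 1)) :
    U₂ x y = x ∨ U₂ x y = y := by
  obtain ⟨⟨hx, hy⟩, hnot⟩ := h
  have hn1 : ¬((x,y) ∈ Icc (0:ℝ) e₂ ×ˢ Icc (0:ℝ) e₂) := fun hc => hnot (Or.inl hc)
  have hn2 : ¬((x,y) ∈ Icc e₂ (1:ℝ) ×ˢ Icc e₂ (1:ℝ)) := fun hc => hnot (Or.inr hc)
  rcases le_total x e₂ with hxe | hex
  · have hey : e₂ ≤ y := by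
      rcases le_total y e₂ with hye | hey
      · exact absurd ⟨⟨hx.1, hxe⟩, ⟨hy.1, hye⟩⟩ hn1
      · exact hey
    exact aux19 U₁ U₂ e₁ e₂ hU₁ hU₂ hd x y hx hy hxe hey
  · have hye : y ≤ e₂ := by
      rcases le_total y e₂ with hye | hey
      · exact hye
      · exact absurd ⟨⟨hex, hx.2⟩, ⟨hey, hy.2⟩⟩ hn2
    have := aux19 U₁ U₂ e₁ e₂ hU₁ hU₂ hd y x hy hx hye hex
    have hc : U₂ x y = U₂ y x := hU₂.2.2.1 x hx y hy
    rw [hc]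
    tauto
end
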